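/- arXiv:2509.18202 — 10 statements merged into one kernel-verified Lean document; each statement's English description precedes it below -/
import Mathlib

section
/- Let F and K be compact subsets of the reals with F ⊆ K, and suppose K = K₁ ∪ K₂ ∪ ⋯ ∪ K_ℓ with each Kᵢ nonempty and compact. If the largest gap length of F is strictly smaller than the minimum over all pairs i < j of the distance dist(Kᵢ, Kⱼ), then there exists an index i such that F ⊆ Kᵢ. (Here the largest gap length of F is the supremum of lengths of connected components of Conv(F) \ F, where Conv(F) is the convex hull of F, defined to be 0 if F is an interval.) -/
/-- The largest gap length of a set `F ⊆ ℝ`: the supremum of lengths of the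
bounded connected components of `Conv(F) \ F` (each such component is an open
interval `(a,b)` with `a, b ∈ F` and `(a,b) ∩ F = ∅`); it is `0` (= `sSup ∅`)
when `F` is an interval. -/
noncomputable def maxGap (F : Set ℝ) : ℝ :=
  sSup {d : ℝ | ∃ a ∈ F, ∃ b ∈ F, a < b ∧ Set.Ioo a b ∩ F = ∅ ∧ d = b - a}

/-- `dist(A,B) = inf{|x - y| : x ∈ A, y ∈ B}`. -/
noncomputable def pairDist (A B : Set ℝ) : ℝ :=
  sInf {d : ℝ | ∃ x ∈ A, ∃ y ∈ B, d = |x - y|}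

lemma gap_exists {P Q : Set ℝ} (hP : IsCompact P) (hQ : IsCompact Q)
    {p q : ℝ} (hp : p ∈ P) (hq : q ∈ Q) (hpq : p < q) (hdisj : Disjoint P Q) :
    ∃ a ∈ P, ∃ b ∈ Q, a < b ∧ Set.Ioo a b ∩ (P ∪ Q) = ∅ := by
  set A := P ∩ Set.Iic q with hA
  have hAc : IsCompact A := hP.inter_right isClosed_Iic
  have hAne : A.Nonempty := ⟨p, hp, le_of_lt hpq⟩
  set a := sSup A with ha
  have haA : a ∈ A := hAc.sSup_mem hAne
  have haP : a ∈ P := haA.1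
  have haq : a < q := lt_of_le_of_ne haA.2 (fun h => Set.disjoint_left.1 hdisj haP (h ▸ hq))
  set B := Q ∩ Set.Icc a q with hB
  have hBc : IsCompact B := hQ.inter_right isClosed_Icc
  have hBne : B.Nonempty := ⟨q, hq, le_of_lt haq, le_refl q⟩
  set b := sInf B with hb
  have hbB : b ∈ B := hBc.sInf_mem hBne
  have hbQ : b ∈ Q := hbB.1
  have hab : a < b := lt_of_le_of_ne hbB.2.1 (fun h => Set.disjoint_left.1 hdisj haP (h ▸ hbQ))
  refine ⟨a, haP, b, hbQ, hab, ?_⟩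
  ext t
  simp only [Set.mem_inter_iff, Set.mem_Ioo, Set.mem_union, Set.mem_empty_iff_false, iff_false]
  rintro ⟨⟨hat, htb⟩, htP | htQ⟩
  · have : t ∈ A := ⟨htP, le_trans (le_of_lt htb) hbB.2.2⟩
    exact absurd (le_csSup hAc.bddAbove this) (not_le.2 hat)
  · have : t ∈ B := ⟨htQ, le_of_lt hat, le_trans (le_of_lt htb) hbB.2.2⟩
    exact absurd (csInf_le hBc.bddBelow this) (not_le.2 htb)

theorem gap_lemma (F Kset : Set ℝ) (ℓ : ℕ) (K : Fin ℓ → Set ℝ)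
    (hFc : IsCompact F) (hFne : F.Nonempty) (hKc : IsCompact Kset)
    (hFK : F ⊆ Kset) (hunion : Kset = ⋃ i, K i)
    (hKic : ∀ i, IsCompact (K i)) (hKine : ∀ i, (K i).Nonempty)
    (hgap : ∀ i j : Fin ℓ, i < j → maxGap F < pairDist (K i) (K j)) :
    ∃ i, F ⊆ K i := by
  -- basic facts
  have hFU : F ⊆ ⋃ i, K i := hunion ▸ hFK
  have hgapset_bdd : BddAbove {d : ℝ | ∃ a ∈ F, ∃ b ∈ F, a < b ∧ Set.Ioo a b ∩ F = ∅ ∧ d = b - a} := by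
    obtain ⟨M, hM⟩ := hFc.bddAbove
    obtain ⟨m, hm⟩ := hFc.bddBelow
    refine ⟨M - m, ?_⟩
    rintro d ⟨x, hx, y, hy, _, _, rfl⟩
    have := hM hy; have := hm hx
    simp only [upperBounds, lowerBounds] at *
    linarith
  have hmaxGap_nonneg : 0 ≤ maxGap F := by
    apply Real.sSup_nonneg
    rintro d ⟨x, _, y, _, hxy, _, rfl⟩
    linarith
  have hpd_bdd : ∀ i j : Fin ℓ,
      BddBelow {d : ℝ | ∃ x ∈ K i, ∃ y ∈ K j, d = |x - y|} := by
    intro i j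
    refine ⟨0, ?_⟩
    rintro d ⟨x, _, y, _, rfl⟩
    exact abs_nonneg _
  have hpd_le : ∀ (i j : Fin ℓ) (x y : ℝ), x ∈ K i → y ∈ K j →
      pairDist (K i) (K j) ≤ |x - y| := fun i j x y hx hy =>
    csInf_le (hpd_bdd i j) ⟨x, hx, y, hy, rfl⟩
  -- strict separation for i ≠ j
  have hsep : ∀ i j : Fin ℓ, i ≠ j → ∀ x y : ℝ, x ∈ K i → y ∈ K j →
      maxGap F < |x - y| := by
    intro i j hij x y hx hy
    rcases lt_or_gt_of_ne hij with h | h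
    · exact lt_of_lt_of_le (hgap i j h) (hpd_le i j x y hx hy)
    · calc maxGap F < pairDist (K j) (K i) := hgap j i h
        _ ≤ |y - x| := hpd_le j i y x hy hx
        _ = |x - y| := abs_sub_comm y x
  have hdisjK : ∀ i j : Fin ℓ, i ≠ j → Disjoint (K i) (K j) := by
    intro i j hij
    rw [Set.disjoint_left]
    intro x hxi hxj
    have := hsep i j hij x x hxi hxj
    simp at this
    linarith
  -- pick the index of some point of F
  obtain ⟨x₀, hx₀⟩ := hFne
  obtain ⟨i₀, hx₀i⟩ := Set.mem_iUnion.1 (hFU hx₀)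
  refine ⟨i₀, ?_⟩
  by_contra hns
  obtain ⟨y, hyF, hyK⟩ := Set.not_subset.1 hns
  set P := F ∩ K i₀ with hPdef
  set Q := F \ K i₀ with hQdef
  have hQeq : Q = F ∩ ⋃ j : {j : Fin ℓ // j ≠ i₀}, K j := by
    ext t
    simp only [hQdef, Set.mem_diff, Set.mem_inter_iff, Set.mem_iUnion]
    constructor
    · rintro ⟨htF, htK⟩
      obtain ⟨j, hj⟩ := Set.mem_iUnion.1 (hFU htF)
      exact ⟨htF, ⟨j, fun h => htK (h ▸ hj)⟩, hj⟩
    · rintro ⟨htF, ⟨j, hj⟩, htj⟩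
      exact ⟨htF, fun h => Set.disjoint_left.1 (hdisjK j i₀ hj) htj h⟩
  have hPc : IsCompact P := hFc.inter_right (hKic i₀).isClosed
  have hQc : IsCompact Q := by
    rw [hQeq]
    exact hFc.inter_right (isClosed_iUnion_of_finite fun j => (hKic j).isClosed)
  have hdisjPQ : Disjoint P Q := by
    rw [Set.disjoint_left]
    rintro t ⟨_, ht⟩ ⟨_, ht'⟩
    exact ht' ht
  have hPQ : P ∪ Q = F := Set.inter_union_diff F (K i₀)
  have hpP : x₀ ∈ P := ⟨hx₀, hx₀i⟩
  have hqQ : y ∈ Q := ⟨hyF, hyK⟩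
  have hne : x₀ ≠ y := fun h => hyK (h ▸ hx₀i)
  -- get a gap between different pieces
  have key : ∃ u v : ℝ, u ∈ F ∧ v ∈ F ∧ u < v ∧ Set.Ioo u v ∩ F = ∅ ∧
      ((u ∈ K i₀ ∧ v ∈ Q) ∨ (u ∈ Q ∧ v ∈ K i₀)) := by
    rcases lt_or_gt_of_ne hne with h | h
    · obtain ⟨a, haP, b, hbQ, hab, hIoo⟩ := gap_exists hPc hQc hpP hqQ h hdisjPQ
      exact ⟨a, b, haP.1, hbQ.1, hab, hPQ ▸ hIoo, Or.inl ⟨haP.2, hbQ⟩⟩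
    · obtain ⟨a, haQ, b, hbP, hab, hIoo⟩ := gap_exists hQc hPc hqQ hpP h hdisjPQ.symm
      have : Set.Ioo a b ∩ (P ∪ Q) = Set.Ioo a b ∩ (Q ∪ P) := by rw [Set.union_comm]
      exact ⟨a, b, haQ.1, hbP.1, hab, hPQ ▸ (this ▸ hIoo), Or.inr ⟨haQ, hbP.2⟩⟩
  obtain ⟨u, v, huF, hvF, huv, hIoo, hcase⟩ := key
  have hle : v - u ≤ maxGap F := le_csSup hgapset_bdd ⟨u, huF, v, hvF, huv, hIoo, rfl⟩
  have habs : |u - v| = v - u := by rw [abs_sub_comm]; exact abs_of_pos (by linarith)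
  rcases hcase with ⟨huK, hvQ⟩ | ⟨huQ, hvK⟩
  · obtain ⟨j, hj⟩ := Set.mem_iUnion.1 (hFU hvQ.1)
    have hjne : i₀ ≠ j := fun h => hvQ.2 (h ▸ hj)
    have := hsep i₀ j hjne u v huK hj
    rw [habs] at this
    linarith
  · obtain ⟨j, hj⟩ := Set.mem_iUnion.1 (hFU huQ.1)
    have hjne : j ≠ i₀ := fun h => huQ.2 (h ▸ hj)
    have := hsep j i₀ hjne u v hj hvK
    rw [habs] at this
    linarith
end

section
/- Let 0 < ρ < 1/3, ρ ≤ λ < (1−ρ)/2, and let E be the attractor of the IFS {ρx, ρx+λ, ρx+1−ρ}. If f(x) = rx + t with 0 < |r| < 1 and f(E) ⊆ E, then f(E) ⊆ φ₁(E) ∪ φ₂(E) or f(E) ⊆ φ₃(E), where φ₁(x)=ρx, φ₂(x)=ρx+λ, φ₃(x)=ρx+1−ρ. -/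
lemma density_lemma (ρ lam : ℝ) (E : Set ℝ) (hρ0 : 0 < ρ) (hρ3 : ρ < 1 / 3)
    (hl1 : ρ ≤ lam) (hl2 : lam < (1 - ρ) / 2)
    (h1 : ∀ y ∈ E, ρ * y ∈ E) (h2 : ∀ y ∈ E, ρ * y + lam ∈ E)
    (h3 : ∀ y ∈ E, ρ * y + (1 - ρ) ∈ E)
    (h0E : (0:ℝ) ∈ E) (h1E : (1:ℝ) ∈ E) :
    ∀ n : ℕ, ∀ x : ℝ, 0 ≤ x → x ≤ 1 →
      ∃ e₁ ∈ E, ∃ e₂ ∈ E, e₁ ≤ x ∧ x ≤ e₂ ∧ e₂ - e₁ ≤ max (1 - 2*ρ - lam) (ρ^n) := by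
  intro n
  induction n with
  | zero =>
    intro x hx0 hx1
    exact ⟨0, h0E, 1, h1E, hx0, hx1, by simp⟩
  | succ n ih =>
    intro x hx0 hx1
    have hg : 0 < 1 - 2*ρ - lam := by linarith
    have hmax : ρ * max (1 - 2*ρ - lam) (ρ^n) ≤ max (1 - 2*ρ - lam) (ρ^(n+1)) := by
      rcases max_cases (1 - 2*ρ - lam) (ρ^n) with ⟨h, _⟩ | ⟨h, _⟩
      · rw [h]
        have : ρ * (1 - 2*ρ - lam) ≤ 1 - 2*ρ - lam := by nlinarith
        exact le_trans this (le_max_left _ _)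
      · rw [h, ← pow_succ']
        exact le_max_right _ _
    by_cases hc1 : x ≤ ρ
    · obtain ⟨e₁, he₁, e₂, he₂, hl, hr, hd⟩ := ih (x / ρ) (by positivity) (by
        rw [div_le_one hρ0]; linarith)
      refine ⟨ρ * e₁, h1 _ he₁, ρ * e₂, h1 _ he₂, ?_, ?_, ?_⟩
      · calc ρ * e₁ ≤ ρ * (x / ρ) := by nlinarith
          _ = x := by field_simp
      · calc x = ρ * (x / ρ) := by field_simp
          _ ≤ ρ * e₂ := by nlinarith
      · calc ρ * e₂ - ρ * e₁ = ρ * (e₂ - e₁) := by ring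
          _ ≤ ρ * max (1 - 2*ρ - lam) (ρ^n) := by nlinarith
          _ ≤ _ := hmax
    · by_cases hc2 : x < lam
      · refine ⟨ρ, by simpa using h1 1 h1E, lam, by simpa using h2 0 h0E, by linarith, by linarith, ?_⟩
        have : lam - ρ ≤ 1 - 2*ρ - lam := by linarith
        exact le_trans this (le_max_left _ _)
      · by_cases hc3 : x ≤ lam + ρ
        · obtain ⟨e₁, he₁, e₂, he₂, hl, hr, hd⟩ := ih ((x - lam) / ρ)
            (by apply div_nonneg _ hρ0.le; linarith) (by
              rw [div_le_one hρ0]; linarith)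
          refine ⟨ρ * e₁ + lam, h2 _ he₁, ρ * e₂ + lam, h2 _ he₂, ?_, ?_, ?_⟩
          · have : ρ * e₁ ≤ ρ * ((x - lam) / ρ) := by nlinarith
            have h' : ρ * ((x - lam) / ρ) = x - lam := by field_simp
            linarith [h' ▸ this]
          · have : ρ * ((x - lam) / ρ) ≤ ρ * e₂ := by nlinarith
            have h' : ρ * ((x - lam) / ρ) = x - lam := by field_simp
            linarith [h' ▸ this]
          · calc ρ * e₂ + lam - (ρ * e₁ + lam) = ρ * (e₂ - e₁) := by ring
              _ ≤ ρ * max (1 - 2*ρ - lam) (ρ^n) := by nlinarith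
              _ ≤ _ := hmax
        · by_cases hc4 : x < 1 - ρ
          · refine ⟨lam + ρ, by simpa [add_comm] using h2 1 h1E, 1 - ρ,
              by simpa using h3 0 h0E, by linarith, by linarith, ?_⟩
            have : 1 - ρ - (lam + ρ) ≤ 1 - 2*ρ - lam := by linarith
            exact le_trans this (le_max_left _ _)
          · obtain ⟨e₁, he₁, e₂, he₂, hl, hr, hd⟩ := ih ((x - (1 - ρ)) / ρ)
              (by apply div_nonneg _ hρ0.le; linarith) (by
                rw [div_le_one hρ0]; linarith)
            refine ⟨ρ * e₁ + (1 - ρ), h3 _ he₁, ρ * e₂ + (1 - ρ), h3 _ he₂, ?_, ?_, ?_⟩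
            · have : ρ * e₁ ≤ ρ * ((x - (1 - ρ)) / ρ) := by nlinarith
              have h' : ρ * ((x - (1 - ρ)) / ρ) = x - (1 - ρ) := by field_simp
              linarith [h' ▸ this]
            · have : ρ * ((x - (1 - ρ)) / ρ) ≤ ρ * e₂ := by nlinarith
              have h' : ρ * ((x - (1 - ρ)) / ρ) = x - (1 - ρ) := by field_simp
              linarith [h' ▸ this]
            · calc ρ * e₂ + (1 - ρ) - (ρ * e₁ + (1 - ρ)) = ρ * (e₂ - e₁) := by ring
                _ ≤ ρ * max (1 - 2*ρ - lam) (ρ^n) := by nlinarith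
                _ ≤ _ := hmax
theorem dichotomy (ρ lam r t : ℝ) (E : Set ℝ)
    (hρ0 : 0 < ρ) (hρ3 : ρ < 1 / 3) (hl1 : ρ ≤ lam) (hl2 : lam < (1 - ρ) / 2)
    (hEc : IsCompact E) (hEne : E.Nonempty)
    (hE : E = (fun x : ℝ => ρ * x) '' E ∪ (fun x : ℝ => ρ * x + lam) '' E ∪
        (fun x : ℝ => ρ * x + (1 - ρ)) '' E)
    (hr0 : 0 < |r|) (hr1 : |r| < 1)
    (hf : (fun x : ℝ => r * x + t) '' E ⊆ E) :
    (fun x : ℝ => r * x + t) '' E ⊆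
        (fun x : ℝ => ρ * x) '' E ∪ (fun x : ℝ => ρ * x + lam) '' E ∨
      (fun x : ℝ => r * x + t) '' E ⊆ (fun x : ℝ => ρ * x + (1 - ρ)) '' E := by
  -- basic closure properties
  have h1 : ∀ y ∈ E, ρ * y ∈ E := by
    intro y hy; rw [hE]; exact Or.inl (Or.inl ⟨y, hy, rfl⟩)
  have h2 : ∀ y ∈ E, ρ * y + lam ∈ E := by
    intro y hy; rw [hE]; exact Or.inl (Or.inr ⟨y, hy, rfl⟩)
  have h3 : ∀ y ∈ E, ρ * y + (1 - ρ) ∈ E := by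
    intro y hy; rw [hE]; exact Or.inr ⟨y, hy, rfl⟩
  -- E ⊆ [0,1], 0 ∈ E, 1 ∈ E
  have hbb : BddBelow E := hEc.bddBelow
  have hba : BddAbove E := hEc.bddAbove
  obtain ⟨a, hadef⟩ : ∃ a, a = sInf E := ⟨_, rfl⟩
  obtain ⟨b, hbdef⟩ : ∃ b, b = sSup E := ⟨_, rfl⟩
  have haE : a ∈ E := hadef ▸ hEc.sInf_mem hEne
  have hbE : b ∈ E := hbdef ▸ hEc.sSup_mem hEne
  have hainf : ∀ y ∈ E, a ≤ y := fun y hy => hadef ▸ csInf_le hbb hy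
  have hbsup : ∀ y ∈ E, y ≤ b := fun y hy => hbdef ▸ le_csSup hba hy
  have ha0 : a = 0 := by
    have hle : a ≤ ρ * a := hainf _ (h1 _ haE)
    have haneg : a ≤ 0 := by nlinarith
    have hapos : 0 ≤ a := by
      have hmem := haE
      rw [hE] at hmem
      rcases hmem with (⟨y, hy, hxy⟩ | ⟨y, hy, hxy⟩) | ⟨y, hy, hxy⟩
      · have hxy' : ρ * y = a := hxy
        have := hainf y hy
        nlinarith
      · have hxy' : ρ * y + lam = a := hxy
        have := hainf y hy
        nlinarith
      · have hxy' : ρ * y + (1 - ρ) = a := hxy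
        have := hainf y hy
        nlinarith
    linarith
  have hb1 : b = 1 := by
    have hle : ρ * b + (1 - ρ) ≤ b := hbsup _ (h3 _ hbE)
    have hb1' : 1 ≤ b := by nlinarith
    have hb2' : b ≤ 1 := by
      have hmem := hbE
      rw [hE] at hmem
      rcases hmem with (⟨y, hy, hxy⟩ | ⟨y, hy, hxy⟩) | ⟨y, hy, hxy⟩
      · have hxy' : ρ * y = b := hxy
        have := hbsup y hy
        nlinarith
      · have hxy' : ρ * y + lam = b := hxy
        have := hbsup y hy
        nlinarith
      · have hxy' : ρ * y + (1 - ρ) = b := hxy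
        have := hbsup y hy
        nlinarith
    linarith
  have h0E : (0:ℝ) ∈ E := ha0 ▸ haE
  have h1E : (1:ℝ) ∈ E := hb1 ▸ hbE
  have hlb : ∀ y ∈ E, 0 ≤ y := fun y hy => ha0 ▸ hainf y hy
  have hub : ∀ y ∈ E, y ≤ 1 := fun y hy => hb1 ▸ hbsup y hy
  -- the gap property
  have hgap : ∀ y ∈ E, y ≤ lam + ρ ∨ 1 - ρ ≤ y := by
    intro y hy
    rw [hE] at hy
    rcases hy with (⟨z, hz, hzy⟩ | ⟨z, hz, hzy⟩) | ⟨z, hz, hzy⟩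
    · have hzy' : ρ * z = y := hzy
      left; have := hub z hz; nlinarith
    · have hzy' : ρ * z + lam = y := hzy
      left; have := hub z hz; nlinarith
    · have hzy' : ρ * z + (1 - ρ) = y := hzy
      right; have := hlb z hz; nlinarith
  -- by contradiction
  by_contra hcon
  push_neg at hcon
  obtain ⟨hnot1, hnot2⟩ := hcon
  rw [Set.not_subset] at hnot1 hnot2
  obtain ⟨p, ⟨xp, hxpE, hxp⟩, hpnot⟩ := hnot1
  obtain ⟨q, ⟨xq, hxqE, hxq⟩, hqnot⟩ := hnot2
  have hxp' : r * xp + t = p := hxp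
  have hxq' : r * xq + t = q := hxq
  have hpE : p ∈ E := hf ⟨xp, hxpE, hxp⟩
  have hqE : q ∈ E := hf ⟨xq, hxqE, hxq⟩
  have hpge : 1 - ρ ≤ p := by
    have hmem := hpE; rw [hE] at hmem
    rcases hmem with hmem | ⟨z, hz, hzy⟩
    · exact absurd hmem hpnot
    · have hzy' : ρ * z + (1 - ρ) = p := hzy
      have := hlb z hz; nlinarith
  have hqle : q ≤ lam + ρ := by
    have hmem := hqE; rw [hE] at hmem
    rcases hmem with (⟨z, hz, hzy⟩ | ⟨z, hz, hzy⟩) | hmem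
    · have hzy' : ρ * z = q := hzy
      have := hub z hz; nlinarith
    · have hzy' : ρ * z + lam = q := hzy
      have := hub z hz; nlinarith
    · exact absurd hmem hqnot
  have hgpos : 0 < 1 - 2*ρ - lam := by linarith
  -- key: no interval of length > gap inside [0,1] avoids E
  have key : ∀ c d : ℝ, 0 ≤ c → d ≤ 1 → 1 - 2*ρ - lam < d - c →
      (∀ e ∈ E, ¬ (c < e ∧ e < d)) → False := by
    intro c d hc0 hd1 hlen hnoE
    obtain ⟨n, hn⟩ := exists_pow_lt_of_lt_one (by linarith : (0:ℝ) < d - c)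
      (by linarith : ρ < 1)
    have hcd : c < d := by linarith
    obtain ⟨e₁, he₁, e₂, he₂, hle1, hle2, hd12⟩ :=
      density_lemma ρ lam E hρ0 hρ3 hl1 hl2 h1 h2 h3 h0E h1E n ((c + d) / 2)
        (by linarith) (by linarith)
    have hmaxlt : max (1 - 2*ρ - lam) (ρ^n) < d - c := max_lt hlen hn
    have he1c : e₁ ≤ c := by
      by_contra hcc
      push_neg at hcc
      exact hnoE e₁ he₁ ⟨hcc, by linarith⟩
    have he2d : d ≤ e₂ := by
      by_contra hcc
      push_neg at hcc
      exact hnoE e₂ he₂ ⟨by linarith, hcc⟩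
    linarith
  have hrne : r ≠ 0 := by
    intro h; rw [h] at hr0; simp at hr0
  rcases hrne.lt_or_gt with hrneg | hrpos
  · -- r < 0
    have hrabs : |r| = -r := abs_of_neg hrneg
    rw [hrabs] at hr1
    obtain ⟨c, hrc⟩ : ∃ c, r * c = 1 - ρ - t := ⟨(1 - ρ - t) / r, by field_simp⟩
    obtain ⟨d, hrd⟩ : ∃ d, r * d = lam + ρ - t := ⟨(lam + ρ - t) / r, by field_simp⟩
    have hxpc : xp ≤ c := by
      have hmul : -r * xp ≤ -r * c := by linarith
      exact le_of_mul_le_mul_left hmul (by linarith)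
    have hxqd : d ≤ xq := by
      have hmul : -r * d ≤ -r * xq := by linarith
      exact le_of_mul_le_mul_left hmul (by linarith)
    have hlen : 1 - 2*ρ - lam < d - c := by
      have hrdc : r * (d - c) = -(1 - 2*ρ - lam) := by rw [mul_sub, hrc, hrd]; ring
      by_contra hcon2
      push_neg at hcon2
      linarith [mul_le_mul_of_nonpos_left hcon2 hrneg.le,
        mul_pos hgpos (show (0:ℝ) < 1 + r by linarith)]
    refine key c d (le_trans (hlb xp hxpE) hxpc) (le_trans hxqd (hub xq hxqE)) hlen ?_
    rintro e heE ⟨hec, hed⟩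
    have hfe : r * e + t ∈ E := hf ⟨e, heE, rfl⟩
    have hg1 : r * e + t < 1 - ρ := by linarith [mul_lt_mul_of_neg_left hec hrneg]
    have hg2 : lam + ρ < r * e + t := by linarith [mul_lt_mul_of_neg_left hed hrneg]
    rcases hgap _ hfe with h | h <;> linarith
  · -- r > 0
    have hrabs : |r| = r := abs_of_pos hrpos
    rw [hrabs] at hr1
    obtain ⟨c, hrc⟩ : ∃ c, r * c = lam + ρ - t := ⟨(lam + ρ - t) / r, by field_simp⟩
    obtain ⟨d, hrd⟩ : ∃ d, r * d = 1 - ρ - t := ⟨(1 - ρ - t) / r, by field_simp⟩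
    have hxqc : xq ≤ c := by
      have hmul : r * xq ≤ r * c := by linarith
      exact le_of_mul_le_mul_left hmul hrpos
    have hxpd : d ≤ xp := by
      have hmul : r * d ≤ r * xp := by linarith
      exact le_of_mul_le_mul_left hmul hrpos
    have hlen : 1 - 2*ρ - lam < d - c := by
      have hrdc : r * (d - c) = 1 - 2*ρ - lam := by rw [mul_sub, hrc, hrd]; ring
      by_contra hcon2
      push_neg at hcon2
      linarith [mul_le_mul_of_nonneg_left hcon2 hrpos.le,
        mul_lt_mul_of_pos_right hr1 hgpos]
    refine key c d (le_trans (hlb xq hxqE) hxqc) (le_trans hxpd (hub xp hxpE)) hlen ?_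
    rintro e heE ⟨hec, hed⟩
    have hfe : r * e + t ∈ E := hf ⟨e, heE, rfl⟩
    have hg1 : lam + ρ < r * e + t := by linarith [mul_lt_mul_of_pos_left hec hrpos]
    have hg2 : r * e + t < 1 - ρ := by linarith [mul_lt_mul_of_pos_left hed hrpos]
    rcases hgap _ hfe with h | h <;> linarith
end

section
/- Let 0 < ρ < 1/3 and ρ ≤ λ < (1−ρ)/2, and let E = E_{ρ,λ} be the attractor of {ρx, ρx+λ, ρx+1−ρ}. Then E is not symmetric: there is no t₀ ∈ ℝ with t₀ − E = E. -/
theorem attractor_not_symmetric (ρ lam : ℝ) (E : Set ℝ)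
    (hρ0 : 0 < ρ) (hρ3 : ρ < 1 / 3) (hl1 : ρ ≤ lam) (hl2 : lam < (1 - ρ) / 2)
    (hEc : IsCompact E) (hEne : E.Nonempty)
    (hE : E = (fun x : ℝ => ρ * x) '' E ∪ (fun x : ℝ => ρ * x + lam) '' E ∪
        (fun x : ℝ => ρ * x + (1 - ρ)) '' E) :
    ¬ ∃ t₀ : ℝ, (fun x : ℝ => t₀ - x) '' E = E := by
  rintro ⟨t₀, hSym⟩
  have hρ1 : ρ < 1 := by linarith
  -- maps into E
  have hmap : ∀ y ∈ E, ρ * y ∈ E ∧ ρ * y + lam ∈ E ∧ ρ * y + (1 - ρ) ∈ E := by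
    intro y hy
    refine ⟨?_, ?_, ?_⟩ <;> rw [hE]
    · exact Set.mem_union_left _ (Set.mem_union_left _ (Set.mem_image_of_mem _ hy))
    · exact Set.mem_union_left _ (Set.mem_union_right _ (Set.mem_image_of_mem _ hy))
    · exact Set.mem_union_right _ (Set.mem_image_of_mem _ hy)
  -- decomposition
  have hdecomp : ∀ x ∈ E, ∃ y ∈ E, x = ρ * y ∨ x = ρ * y + lam ∨ x = ρ * y + (1 - ρ) := by
    intro x hx
    rw [hE] at hx
    simp only [Set.mem_union, Set.mem_image] at hx
    rcases hx with (⟨y, hy, h⟩ | ⟨y, hy, h⟩) | ⟨y, hy, h⟩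
    · exact ⟨y, hy, Or.inl h.symm⟩
    · exact ⟨y, hy, Or.inr (Or.inl h.symm)⟩
    · exact ⟨y, hy, Or.inr (Or.inr h.symm)⟩
  have hMmem : sSup E ∈ E := hEc.sSup_mem hEne
  have hmmem : sInf E ∈ E := hEc.sInf_mem hEne
  have hleM : ∀ x ∈ E, x ≤ sSup E := fun x hx => le_csSup hEc.bddAbove hx
  have hgem : ∀ x ∈ E, sInf E ≤ x := fun x hx => csInf_le hEc.bddBelow hx
  set M := sSup E with hMdef
  set m := sInf E with hmdef
  -- M = 1
  have hMge1 : 1 ≤ M := by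
    have h1 : ρ * M + (1 - ρ) ∈ E := (hmap M hMmem).2.2
    have h2 := hleM _ h1
    nlinarith
  have hM1 : M = 1 := by
    obtain ⟨y, hy, hcase⟩ := hdecomp M hMmem
    have hyM := hleM y hy
    have hρy : ρ * y ≤ ρ * M := by nlinarith
    rcases hcase with h | h | h
    · nlinarith
    · nlinarith
    · nlinarith
  -- m = 0
  have hmle0 : m ≤ 0 := by
    have h1 : ρ * m ∈ E := (hmap m hmmem).1
    have h2 := hgem _ h1
    nlinarith
  have hm0 : m = 0 := by
    obtain ⟨y, hy, hcase⟩ := hdecomp m hmmem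
    have hym := hgem y hy
    have hρy : ρ * m ≤ ρ * y := by nlinarith
    rcases hcase with h | h | h
    · nlinarith
    · nlinarith
    · nlinarith
  have h0E : (0 : ℝ) ∈ E := hm0 ▸ hmmem
  have h1E : (1 : ℝ) ∈ E := hM1 ▸ hMmem
  have hbound : ∀ x ∈ E, 0 ≤ x ∧ x ≤ 1 := by
    intro x hx
    constructor
    · have := hgem x hx; linarith [hm0 ▸ this]
    · have := hleM x hx; linarith [hM1 ▸ this]
  -- localization in three intervals
  have hloc : ∀ x ∈ E, x ≤ ρ ∨ (lam ≤ x ∧ x ≤ lam + ρ) ∨ 1 - ρ ≤ x := by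
    intro x hx
    obtain ⟨y, hy, hcase⟩ := hdecomp x hx
    obtain ⟨hy0, hy1⟩ := hbound y hy
    have h1 : ρ * y ≤ ρ * 1 := by nlinarith
    have h2 : ρ * 0 ≤ ρ * y := by nlinarith
    rcases hcase with h | h | h
    · left; rw [h]; linarith
    · right; left; rw [h]; constructor <;> linarith
    · right; right; rw [h]; linarith
  -- symmetry
  have hsymmem : ∀ x ∈ E, t₀ - x ∈ E := by
    intro x hx
    rw [← hSym]
    exact ⟨x, hx, rfl⟩
  have ht₀ : t₀ = 1 := by
    have h1 : t₀ - 0 ∈ E := hsymmem 0 h0E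
    have h2 : t₀ - 1 ∈ E := hsymmem 1 h1E
    have h3 := (hbound _ h1).2
    have h4 := (hbound _ h2).1
    linarith
  -- powers of ρ are in E
  have hpow : ∀ n : ℕ, ρ ^ n ∈ E := by
    intro n
    induction n with
    | zero => simpa using h1E
    | succ k ih =>
      have := (hmap _ ih).1
      rwa [show ρ * ρ ^ k = ρ ^ (k + 1) by ring] at this
  obtain ⟨n, hn⟩ := exists_pow_lt_of_lt_one (show (0 : ℝ) < 1 - 2 * lam - ρ by linarith) hρ1
  have hqpos : 0 < ρ * ρ ^ n := mul_pos hρ0 (pow_pos hρ0 n)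
  have hqlt : ρ * ρ ^ n < 1 - 2 * lam - ρ := by
    have hpn : 0 < ρ ^ n := pow_pos hρ0 n
    nlinarith
  have hpE : ρ * ρ ^ n + lam ∈ E := (hmap _ (hpow n)).2.1
  have hrE : t₀ - (ρ * ρ ^ n + lam) ∈ E := hsymmem _ hpE
  rw [ht₀] at hrE
  rcases hloc _ hrE with h | ⟨h, h'⟩ | h
  · linarith
  · linarith
  · linarith
end

section
/- Let 0 < ρ < 1/3 and ρ ≤ λ < (1−ρ)/2, and let E = E_{ρ,λ} be the attractor of {ρx, ρx+λ, ρx+1−ρ}. Then the set ρE ∪ (ρE + λ) is not symmetric: there is no t₀ ∈ ℝ with t₀ − (ρE ∪ (ρE+λ)) = ρE ∪ (ρE+λ). -/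
theorem union_not_symmetric (ρ lam : ℝ) (E : Set ℝ)
    (hρ0 : 0 < ρ) (hρ3 : ρ < 1 / 3) (hl1 : ρ ≤ lam) (hl2 : lam < (1 - ρ) / 2)
    (hEc : IsCompact E) (hEne : E.Nonempty)
    (hE : E = (fun x : ℝ => ρ * x) '' E ∪ (fun x : ℝ => ρ * x + lam) '' E ∪
        (fun x : ℝ => ρ * x + (1 - ρ)) '' E) :
    ¬ ∃ t₀ : ℝ,
      (fun x : ℝ => t₀ - x) ''
          ((fun x : ℝ => ρ * x) '' E ∪ (fun x : ℝ => ρ * x + lam) '' E) =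
        (fun x : ℝ => ρ * x) '' E ∪ (fun x : ℝ => ρ * x + lam) '' E := by
  rintro ⟨t₀, ht⟩
  have hρ1 : ρ < 1 := by linarith
  have hbddA := hEc.bddAbove
  have hbddB := hEc.bddBelow
  -- sup and inf of E
  have hSmem : sSup E ∈ E := hEc.sSup_mem hEne
  have hImem : sInf E ∈ E := hEc.sInf_mem hEne
  set S := sSup E with hSdef
  set I := sInf E with hIdef
  have hS3 : ρ * S + (1 - ρ) ∈ E := by
    rw [hE]; exact Or.inr ⟨S, hSmem, rfl⟩
  have hS1 : 1 ≤ S := by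
    have h := le_csSup hbddA hS3
    nlinarith
  have hSle : S ≤ 1 := by
    have hmem := hSmem
    rw [hE] at hmem
    rcases hmem with (⟨x, hx, hx'⟩ | ⟨x, hx, hx'⟩) | ⟨x, hx, hx'⟩ <;>
      dsimp only at hx' <;> have hxS := le_csSup hbddA hx <;> nlinarith
  have hSeq : S = 1 := le_antisymm hSle hS1
  have hI1 : ρ * I ∈ E := by
    rw [hE]; exact Or.inl (Or.inl ⟨I, hImem, rfl⟩)
  have hIle : I ≤ 0 := by
    have h := csInf_le hbddB hI1
    nlinarith
  have hIge : 0 ≤ I := by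
    have hmem := hImem
    rw [hE] at hmem
    rcases hmem with (⟨x, hx, hx'⟩ | ⟨x, hx, hx'⟩) | ⟨x, hx, hx'⟩ <;>
      dsimp only at hx' <;> have hxI := csInf_le hbddB hx <;> nlinarith
  have hIeq : I = 0 := le_antisymm hIle hIge
  have h1E : (1 : ℝ) ∈ E := hSeq ▸ hSmem
  have h0E : (0 : ℝ) ∈ E := hIeq ▸ hImem
  have hub : ∀ x ∈ E, x ≤ 1 := fun x hx => hSeq ▸ le_csSup hbddA hx
  have hlb : ∀ x ∈ E, 0 ≤ x := fun x hx => hIeq ▸ csInf_le hbddB hx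
  -- membership helpers
  have hm1 : ∀ x ∈ E, ρ * x ∈ E := by
    intro x hx; rw [hE]; exact Or.inl (Or.inl ⟨x, hx, rfl⟩)
  have hm2 : ∀ x ∈ E, ρ * x + lam ∈ E := by
    intro x hx; rw [hE]; exact Or.inl (Or.inr ⟨x, hx, rfl⟩)
  -- the gap of E
  have hgap : ∀ x ∈ E, x ≤ lam + ρ ∨ 1 - ρ ≤ x := by
    intro x hx
    rw [hE] at hx
    rcases hx with (⟨e, he, he'⟩ | ⟨e, he, he'⟩) | ⟨e, he, he'⟩ <;> dsimp only at he'
    · left; have := hub e he; nlinarith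
    · left; have := hub e he; nlinarith
    · right; have := hlb e he; nlinarith
  -- the set F
  set F : Set ℝ := (fun x : ℝ => ρ * x) '' E ∪ (fun x : ℝ => ρ * x + lam) '' E with hF
  have hFmem : ∀ y ∈ F, t₀ - y ∈ F := by
    intro y hy; rw [← ht]; exact ⟨y, hy, rfl⟩
  have h0F : (0 : ℝ) ∈ F := Or.inl ⟨0, h0E, by simp⟩
  have hmaxF : lam + ρ ∈ F := Or.inr ⟨1, h1E, by ring⟩
  have hFub : ∀ y ∈ F, y ≤ lam + ρ := by
    intro y hy
    rcases hy with ⟨e, he, he'⟩ | ⟨e, he, he'⟩ <;> dsimp only at he' <;>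
      have := hub e he <;> nlinarith
  have hFlb : ∀ y ∈ F, 0 ≤ y := by
    intro y hy
    rcases hy with ⟨e, he, he'⟩ | ⟨e, he, he'⟩ <;> dsimp only at he' <;>
      have := hlb e he <;> nlinarith
  have ht0a : t₀ ≤ lam + ρ := by
    have h := hFmem 0 h0F
    have := hFub _ h
    linarith
  have ht0b : lam + ρ ≤ t₀ := by
    have h := hFmem _ hmaxF
    have := hFlb _ h
    linarith
  have ht0 : t₀ = lam + ρ := le_antisymm ht0a ht0b
  -- reflection property of E
  have hrefl : ∀ x ∈ E, 1 - x ∈ E := by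
    intro x hx
    have hxF : ρ * x ∈ F := Or.inl ⟨x, hx, rfl⟩
    have h := hFmem _ hxF
    rcases h with ⟨e, he, he'⟩ | ⟨e, he, he'⟩ <;> dsimp only at he'
    · -- ρ e = lam + ρ - ρ x forces x = 1
      have hxe := hub e he
      have hx1 : x = 1 := by
        have h1 : 1 ≤ x := by nlinarith
        exact le_antisymm (hub x hx) h1
      rw [hx1]; simpa using h0E
    · have hee : e = 1 - x := by
        have : ρ * e = ρ * (1 - x) := by rw [ht0] at he'; ring_nf; ring_nf at he'; linarith
        exact mul_left_cancel₀ hρ0.ne' this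
      rwa [hee] at he
  rcases eq_or_lt_of_le hl1 with heq | hlt
  · -- case lam = ρ
    subst heq
    have key : ∀ e ∈ E, 0 < e → 1 - 3 * ρ ≤ ρ * e := by
      intro e he hepos
      have h1 : ρ * e + ρ ∈ E := hm2 e he
      have h2 : 1 - (ρ * e + ρ) ∈ E := hrefl _ h1
      rcases hgap _ h2 with h | h
      · linarith
      · nlinarith
    have hpow : ∀ n : ℕ, ρ ^ n ∈ E := by
      intro n
      induction n with
      | zero => simpa using h1E
      | succ n ih => rw [pow_succ, mul_comm]; exact hm1 _ ih
    have hc : (0 : ℝ) < (1 - 3 * ρ) / ρ := by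
      apply div_pos <;> linarith
    obtain ⟨n, hn⟩ := exists_pow_lt_of_lt_one hc hρ1
    have h2 := key _ (hpow n) (pow_pos hρ0 n)
    rw [lt_div_iff₀ hρ0] at hn
    nlinarith
  · -- case ρ < lam
    have hlamE : lam ∈ E := by have := hm2 0 h0E; simpa using this
    have h1l : 1 - lam ∈ E := hrefl lam hlamE
    rcases hgap _ h1l with h | h <;> linarith
end

section
/- Let m ≥ 2, 0 < ρ₁,…,ρ_m < 1 with ρ₁+⋯+ρ_m < 1, γ = (1−ρ₁−⋯−ρ_m)/(m−1), and let K be the attractor of the IFS {φᵢ(x) = ρᵢx + Σ_{k<i} ρ_k + (i−1)γ}. If f is a contractive similitude on ℝ with f(K) ⊆ K, then there exists a finite word i₁…i_n over {1,…,m} such that f(K) = φ_{i₁} ∘ ⋯ ∘ φ_{i_n}(K). -/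
/-!
Write `φ i x = ρ i * x + a i`. The pieces `φ i '' K` lie in the intervals `[a i, a i + ρ i]`,
separated by holes of length exactly `γ`, so no gap of `K` is longer than `γ`: a gap inside one
piece is the image of a gap of `K` that is longer by the factor `1 / ρ i`, and a gap between two
pieces is a hole. If a strict contraction `f` maps `K` into `K`, then `f '' K` cannot meet two
pieces, since it would have a gap of length at least `γ` across a hole, and `f⁻¹` would turn it into
a gap of `K` longer than `γ`. Hence `f = φ i ∘ g` with `g '' K ⊆ K` and `|g'| = |f'| / ρ i`;
iterating, the ratio grows geometrically until it reaches `1`, where `g` is `id` or `x ↦ 1 - x`,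
and then `g '' K = K`.
-/

/-- Composition `φ_{i₁} ∘ φ_{i₂} ∘ ⋯ ∘ φ_{i_n}` along a finite word. -/
def compWord {ι : Type*} (φ : ι → ℝ → ℝ) (w : List ι) : ℝ → ℝ :=
  w.foldr (fun i g => φ i ∘ g) id

open Set

def IsGap (K : Set ℝ) (u v : ℝ) : Prop :=
  u ∈ K ∧ v ∈ K ∧ Disjoint K (Ioo u v)

theorem IsGap.mono {K F : Set ℝ} {u v : ℝ} (h : IsGap K u v) (hFK : F ⊆ K) (hu : u ∈ F)
    (hv : v ∈ F) : IsGap F u v :=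
  ⟨hu, hv, h.2.2.mono_left hFK⟩

theorem IsGap.of_image_affine {K : Set ℝ} {s c u v : ℝ} (hs : s ≠ 0)
    (h : IsGap ((fun x => s * x + c) '' K) u v) :
    ∃ u' v', IsGap K u' v' ∧ v' - u' = (v - u) / |s| := by
  obtain ⟨⟨u₀, hu₀, rfl⟩, ⟨v₀, hv₀, rfl⟩, hdisj⟩ := h
  have hK : ∀ z ∈ K, s * z + c ∉ Ioo (s * u₀ + c) (s * v₀ + c) :=
    fun z hz => disjoint_left.1 hdisj (mem_image_of_mem _ hz)
  rcases hs.lt_or_gt with hneg | hpos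
  · refine ⟨v₀, u₀, ⟨hv₀, hu₀, disjoint_left.2 fun z hz ⟨hvz, hzu⟩ => hK z hz ⟨?_, ?_⟩⟩, ?_⟩
    · nlinarith
    · nlinarith
    · rw [abs_of_neg hneg]; field_simp; ring
  · refine ⟨u₀, v₀, ⟨hu₀, hv₀, disjoint_left.2 fun z hz ⟨huz, hzv⟩ => hK z hz ⟨?_, ?_⟩⟩, ?_⟩
    · nlinarith
    · nlinarith
    · rw [abs_of_pos hpos]; field_simp; ring

theorem IsCompact.exists_isGap_of_disjoint_Ioo {F : Set ℝ} (hF : IsCompact F) {x y c d : ℝ}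
    (hx : x ∈ F) (hy : y ∈ F) (hxc : x ≤ c) (hdy : d ≤ y) (hFcd : Disjoint F (Ioo c d)) :
    ∃ u v, IsGap F u v ∧ u ≤ c ∧ d ≤ v := by
  obtain ⟨u, ⟨huF, huc⟩, hu⟩ := (hF.inter_right isClosed_Iic).exists_isGreatest ⟨x, hx, hxc⟩
  obtain ⟨v, ⟨hvF, hdv⟩, hv⟩ := (hF.inter_right isClosed_Ici).exists_isLeast ⟨y, hy, hdy⟩
  refine ⟨u, v, ⟨huF, hvF, disjoint_left.2 fun z hz ⟨huz, hzv⟩ => ?_⟩, huc, hdv⟩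
  rcases le_or_gt z c with hzc | hcz
  · exact (hu ⟨hz, hzc⟩).not_gt huz
  rcases lt_or_ge z d with hzd | hdz
  · exact disjoint_left.1 hFcd hz ⟨hcz, hzd⟩
  · exact (hv ⟨hz, hdz⟩).not_gt hzv

theorem induction_on_scale {ι : Type*} [Finite ι] {ρ : ι → ℝ} (hρ0 : ∀ i, 0 < ρ i)
    (hρ1 : ∀ i, ρ i < 1) {P : ℝ → Prop} (hbig : ∀ σ, 1 < σ → P σ)
    (hstep : ∀ σ, 0 < σ → (∀ i, P (σ / ρ i)) → P σ) {σ : ℝ} (hσ : 0 < σ) : P σ := by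
  obtain ⟨R, hR0, hR1, hρR⟩ : ∃ R, 0 < R ∧ R < 1 ∧ ∀ i, ρ i ≤ R := by
    rcases isEmpty_or_nonempty ι with hι | hι
    · exact ⟨1 / 2, by norm_num, by norm_num, isEmptyElim⟩
    · obtain ⟨j, hj⟩ := Finite.exists_max ρ
      exact ⟨ρ j, hρ0 j, hρ1 j, hj⟩
  suffices ∀ n : ℕ, ∀ σ, R ^ n < σ → P σ by
    obtain ⟨n, hn⟩ := exists_pow_lt_of_lt_one hσ hR1
    exact this n σ hn
  intro n
  induction n with
  | zero => simpa using hbig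
  | succ n ih =>
    intro σ hσ
    refine hstep σ (lt_trans (by positivity) hσ) fun i => ih _ ?_
    rw [lt_div_iff₀ (hρ0 i)]
    calc R ^ n * ρ i ≤ R ^ n * R := by gcongr; exact hρR i
      _ = R ^ (n + 1) := by ring
      _ < σ := hσ

theorem abs_le_one_of_image_subset {K : Set ℝ} (h0 : IsLeast K 0) (h1 : IsGreatest K 1)
    {s c : ℝ} (hsub : (fun x => s * x + c) '' K ⊆ K) : |s| ≤ 1 := by
  have hc : c ∈ K := by simpa using hsub (mem_image_of_mem _ h0.1)
  have hsc : s + c ∈ K := by simpa using hsub (mem_image_of_mem _ h1.1)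
  rw [abs_le]
  constructor <;> linarith [h0.2 hc, h1.2 hc, h0.2 hsc, h1.2 hsc]

theorem image_eq_of_abs_eq_one {K : Set ℝ} (h0 : IsLeast K 0) (h1 : IsGreatest K 1)
    {s c : ℝ} (hs : |s| = 1) (hsub : (fun x => s * x + c) '' K ⊆ K) :
    (fun x => s * x + c) '' K = K := by
  have hc : c ∈ K := by simpa using hsub (mem_image_of_mem _ h0.1)
  have hsc : s + c ∈ K := by simpa using hsub (mem_image_of_mem _ h1.1)
  rcases (abs_eq zero_le_one).1 hs with rfl | rfl
  · obtain rfl : c = 0 := by linarith [h0.2 hc, h1.2 hsc]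
    simp
  · obtain rfl : c = 1 := by linarith [h1.2 hc, h0.2 hsc]
    -- `x ↦ 1 - x` is an involution
    exact hsub.antisymm fun x hx => ⟨-1 * x + 1, hsub (mem_image_of_mem _ hx), by ring⟩

theorem affine_comp_affine_div {ρ a s c : ℝ} (hρ : ρ ≠ 0) :
    (fun x => ρ * x + a) ∘ (fun x => s / ρ * x + (c - a) / ρ) = fun x => s * x + c := by
  funext x
  simp only [Function.comp_apply]
  field_simp
  ring

theorem affine_injective {ρ a : ℝ} (hρ : ρ ≠ 0) : Function.Injective fun x => ρ * x + a :=
  fun _ _ hxy => mul_left_cancel₀ hρ (add_right_cancel hxy)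

theorem image_subset_of_eq_iUnion_image {ι α : Type*} {f : ι → α → α} {K : Set α}
    (hK : K = ⋃ i, f i '' K) (i : ι) : f i '' K ⊆ K := fun x hx => by
  rw [hK]
  exact mem_iUnion.2 ⟨i, hx⟩

theorem exists_eq_of_mem_of_eq_iUnion_image {ι α : Type*} {f : ι → α → α} {K : Set α}
    (hK : K = ⋃ i, f i '' K) {x : α} (hx : x ∈ K) : ∃ i, ∃ y ∈ K, f i y = x := by
  rw [hK] at hx
  simpa only [mem_iUnion, mem_image] using hx

theorem affine_zero_mem {ι : Type*} {ρ a : ι → ℝ} {K : Set ℝ}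
    (hK : K = ⋃ i, (fun x => ρ i * x + a i) '' K) (h0 : IsLeast K 0) (i : ι) : a i ∈ K := by
  simpa using image_subset_of_eq_iUnion_image hK i (mem_image_of_mem _ h0.1)

theorem affine_one_mem {ι : Type*} {ρ a : ι → ℝ} {K : Set ℝ}
    (hK : K = ⋃ i, (fun x => ρ i * x + a i) '' K) (h1 : IsGreatest K 1) (i : ι) :
    a i + ρ i ∈ K := by
  simpa [add_comm] using image_subset_of_eq_iUnion_image hK i (mem_image_of_mem _ h1.1)

/-- The maps `x ↦ ρ i * x + a i` send `[0, 1]` onto intervals `[a i, a i + ρ i] ⊆ [0, 1]`, placed in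
the order of `ι`, starting at `0`, ending at `1`, and separated by gaps of length exactly `γ`. -/
structure IsEquallyGapped {ι : Type*} [LinearOrder ι] (ρ a : ι → ℝ) (γ : ℝ) : Prop where
  pos : ∀ i, 0 < ρ i
  lt_one : ∀ i, ρ i < 1
  gap_pos : 0 < γ
  nonneg : ∀ i, 0 ≤ a i
  le_one : ∀ i, a i + ρ i ≤ 1
  exists_eq_zero : ∃ i, a i = 0
  exists_eq_one : ∃ i, a i + ρ i = 1
  add_gap_le : ∀ i j, i < j → a i + ρ i + γ ≤ a j
  exists_next : ∀ i, a i + ρ i < 1 → ∃ j, a j = a i + ρ i + γ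

namespace IsEquallyGapped

variable {ι : Type*} [LinearOrder ι] {ρ a : ι → ℝ} {γ : ℝ} {K : Set ℝ}

theorem strictMono (h : IsEquallyGapped ρ a γ) : StrictMono a :=
  fun i j hij => by linarith [h.add_gap_le i j hij, h.pos i, h.gap_pos]

theorem affine_mem_Icc (h : IsEquallyGapped ρ a γ) (i : ι) {y : ℝ} (hy : y ∈ Icc (0 : ℝ) 1) :
    ρ i * y + a i ∈ Icc (a i) (a i + ρ i) := by
  have := h.pos i
  constructor <;> nlinarith [hy.1, hy.2]

theorem isLeast_zero (h : IsEquallyGapped ρ a γ) (hKc : IsCompact K) (hKne : K.Nonempty)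
    (hK : K = ⋃ i, (fun x => ρ i * x + a i) '' K) : IsLeast K 0 := by
  obtain ⟨s, hsK, hs⟩ := hKc.exists_isLeast hKne
  obtain ⟨i₀, hi₀⟩ := h.exists_eq_zero
  have hs0 : s ≤ 0 := by
    have := hs (image_subset_of_eq_iUnion_image hK i₀ (mem_image_of_mem _ hsK))
    nlinarith [h.lt_one i₀]
  obtain ⟨i, y, hy, rfl⟩ := exists_eq_of_mem_of_eq_iUnion_image hK hsK
  have h0s : 0 ≤ ρ i * y + a i := by
    nlinarith [mul_le_mul_of_nonneg_left (hs hy) (h.pos i).le, h.lt_one i, h.nonneg i]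
  exact ⟨le_antisymm hs0 h0s ▸ hsK, fun x hx => h0s.trans (hs hx)⟩

theorem isGreatest_one (h : IsEquallyGapped ρ a γ) (hKc : IsCompact K) (hKne : K.Nonempty)
    (hK : K = ⋃ i, (fun x => ρ i * x + a i) '' K) : IsGreatest K 1 := by
  obtain ⟨s, hsK, hs⟩ := hKc.exists_isGreatest hKne
  obtain ⟨i₁, hi₁⟩ := h.exists_eq_one
  have hs1 : 1 ≤ s := by
    have := hs (image_subset_of_eq_iUnion_image hK i₁ (mem_image_of_mem _ hsK))
    nlinarith [h.lt_one i₁]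
  obtain ⟨i, y, hy, rfl⟩ := exists_eq_of_mem_of_eq_iUnion_image hK hsK
  have hs1' : ρ i * y + a i ≤ 1 := by
    nlinarith [mul_le_mul_of_nonneg_left (hs hy) (h.pos i).le, h.lt_one i, h.le_one i]
  exact ⟨le_antisymm hs1' hs1 ▸ hsK, fun x hx => (hs hx).trans hs1'⟩

theorem exists_mem_Icc (h : IsEquallyGapped ρ a γ) (hK : K = ⋃ i, (fun x => ρ i * x + a i) '' K)
    (h0 : IsLeast K 0) (h1 : IsGreatest K 1) {x : ℝ} (hx : x ∈ K) :
    ∃ i, x ∈ Icc (a i) (a i + ρ i) := by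
  obtain ⟨i, y, hy, rfl⟩ := exists_eq_of_mem_of_eq_iUnion_image hK hx
  exact ⟨i, h.affine_mem_Icc i ⟨h0.2 hy, h1.2 hy⟩⟩

theorem mem_image_of_mem_Icc (h : IsEquallyGapped ρ a γ)
    (hK : K = ⋃ i, (fun x => ρ i * x + a i) '' K) (h0 : IsLeast K 0) (h1 : IsGreatest K 1)
    {i : ι} {x : ℝ} (hx : x ∈ K) (hxi : x ∈ Icc (a i) (a i + ρ i)) :
    x ∈ (fun y => ρ i * y + a i) '' K := by
  obtain ⟨j, y, hy, rfl⟩ := exists_eq_of_mem_of_eq_iUnion_image hK hx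
  have hxj := h.affine_mem_Icc j ⟨h0.2 hy, h1.2 hy⟩
  obtain rfl : j = i := by
    rcases lt_trichotomy j i with hji | rfl | hij
    · linarith [h.add_gap_le j i hji, hxi.1, hxj.2, h.gap_pos]
    · rfl
    · linarith [h.add_gap_le i j hij, hxi.2, hxj.1, h.gap_pos]
  exact mem_image_of_mem _ hy

theorem disjoint_gap (h : IsEquallyGapped ρ a γ) (hK : K = ⋃ i, (fun x => ρ i * x + a i) '' K)
    (h0 : IsLeast K 0) (h1 : IsGreatest K 1) (i : ι) :
    Disjoint K (Ioo (a i + ρ i) (a i + ρ i + γ)) := by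
  refine disjoint_left.2 fun x hx ⟨hlo, hhi⟩ => ?_
  obtain ⟨j, hj⟩ := h.exists_mem_Icc hK h0 h1 hx
  rcases lt_trichotomy j i with hji | rfl | hij
  · linarith [h.add_gap_le j i hji, h.pos i, hj.2, h.gap_pos]
  · linarith [hj.2]
  · linarith [h.add_gap_le i j hij, hj.1]

theorem gap_le (h : IsEquallyGapped ρ a γ) [Finite ι]
    (hK : K = ⋃ i, (fun x => ρ i * x + a i) '' K) (h0 : IsLeast K 0) (h1 : IsGreatest K 1)
    {u v : ℝ} (huv : IsGap K u v) : v - u ≤ γ := by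
  rcases le_or_gt (v - u) 0 with hle | hpos
  · linarith [h.gap_pos]
  refine induction_on_scale (P := fun L => ∀ u v, IsGap K u v → v - u = L → L ≤ γ)
    h.pos h.lt_one ?_ ?_ hpos u v huv rfl
  · intro L hL u v huv huvL
    linarith [h0.2 huv.1, h1.2 huv.2.1]
  · rintro _ hL ih u v huv rfl
    obtain ⟨i, hui⟩ := h.exists_mem_Icc hK h0 h1 huv.1
    rcases le_or_gt v (a i + ρ i) with hvi | hiv
    · have hvmem := h.mem_image_of_mem_Icc hK h0 h1 huv.2.1 ⟨by linarith [hui.1], hvi⟩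
      obtain ⟨u', v', hgap, hlen⟩ := (huv.mono (image_subset_of_eq_iUnion_image hK i)
        (h.mem_image_of_mem_Icc hK h0 h1 huv.1 hui) hvmem).of_image_affine (h.pos i).ne'
      have := ih i u' v' hgap (by rw [hlen, abs_of_pos (h.pos i)])
      rw [div_le_iff₀ (h.pos i)] at this
      nlinarith [h.lt_one i, h.gap_pos]
    · obtain ⟨j, hj⟩ := h.exists_next i (by linarith [h1.2 huv.2.1])
      have hu : a i + ρ i ≤ u := le_of_not_gt fun hlt =>
        disjoint_left.1 huv.2.2 (affine_one_mem hK h1 i) ⟨hlt, hiv⟩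
      have hv : v ≤ a j := le_of_not_gt fun hlt =>
        disjoint_left.1 huv.2.2 (affine_zero_mem hK h0 j) ⟨by linarith [h.gap_pos, hui.2], hlt⟩
      linarith

theorem exists_image_subset (h : IsEquallyGapped ρ a γ) [Finite ι] (hKc : IsCompact K)
    (hK : K = ⋃ i, (fun x => ρ i * x + a i) '' K) (h0 : IsLeast K 0) (h1 : IsGreatest K 1)
    {s c : ℝ} (hs : s ≠ 0) (hs1 : |s| < 1) (hsub : (fun x => s * x + c) '' K ⊆ K) :
    ∃ i, (fun x => s * x + c) '' K ⊆ (fun x => ρ i * x + a i) '' K := by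
  set F := (fun x => s * x + c) '' K
  have no_straddle : ∀ j, ∀ x ∈ F, ∀ y ∈ F, x ≤ a j + ρ j → a j + ρ j + γ ≤ y → False := by
    intro j x hx y hy hxj hjy
    obtain ⟨u, v, hgap, hu, hv⟩ := (hKc.image (by fun_prop)).exists_isGap_of_disjoint_Ioo hx hy
      hxj hjy ((h.disjoint_gap hK h0 h1 j).mono_left hsub)
    obtain ⟨u', v', hgap', hlen⟩ := hgap.of_image_affine hs
    have := h.gap_le hK h0 h1 hgap'
    rw [hlen, div_le_iff₀ (abs_pos.2 hs)] at this
    nlinarith [h.gap_pos]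
  have hx : c ∈ F := ⟨0, h0.1, by simp⟩
  obtain ⟨i, hxi⟩ := h.exists_mem_Icc hK h0 h1 (hsub hx)
  refine ⟨i, fun y hy => h.mem_image_of_mem_Icc hK h0 h1 (hsub hy) ⟨?_, ?_⟩⟩
  · by_contra! hyi
    obtain ⟨j, hyj⟩ := h.exists_mem_Icc hK h0 h1 (hsub hy)
    have hji : j < i := lt_of_not_ge fun hij =>
      hyi.not_ge ((h.strictMono.monotone hij).trans hyj.1)
    exact no_straddle j y hy c hx hyj.2 ((h.add_gap_le j i hji).trans hxi.1)
  · by_contra! hyi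
    refine no_straddle i c hx y hy hxi.2 (le_of_not_gt fun hlt => ?_)
    exact disjoint_left.1 (h.disjoint_gap hK h0 h1 i) (hsub hy) ⟨hyi, hlt⟩

theorem exists_word (h : IsEquallyGapped ρ a γ) [Finite ι] (hKc : IsCompact K)
    (hKne : K.Nonempty) (hK : K = ⋃ i, (fun x => ρ i * x + a i) '' K) {s c : ℝ} (hs : s ≠ 0)
    (hsub : (fun x => s * x + c) '' K ⊆ K) :
    ∃ w, (fun x => s * x + c) '' K = compWord (fun i x => ρ i * x + a i) w '' K := by
  have h0 := h.isLeast_zero hKc hKne hK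
  have h1 := h.isGreatest_one hKc hKne hK
  refine induction_on_scale (P := fun σ => ∀ s c, |s| = σ → (fun x => s * x + c) '' K ⊆ K →
      ∃ w, (fun x => s * x + c) '' K = compWord (fun i x => ρ i * x + a i) w '' K)
    h.pos h.lt_one ?_ ?_ (abs_pos.2 hs) s c rfl hsub
  · rintro σ hσ s c rfl hsub
    exact absurd (abs_le_one_of_image_subset h0 h1 hsub) hσ.not_ge
  · rintro σ hσ ih s c rfl hsub
    rcases (abs_le_one_of_image_subset h0 h1 hsub).eq_or_lt with hs1 | hs1
    · exact ⟨[], by rw [image_eq_of_abs_eq_one h0 h1 hs1 hsub]; simp [compWord]⟩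
    obtain ⟨i, hi⟩ := h.exists_image_subset hKc hK h0 h1 (abs_pos.1 hσ) hs1 hsub
    have hρi := h.pos i
    have hcomp := affine_comp_affine_div (a := a i) (s := s) (c := c) hρi.ne'
    rw [← hcomp, image_comp] at hi ⊢
    obtain ⟨w, hw⟩ := ih i _ _ (by rw [abs_div, abs_of_pos hρi])
      ((image_subset_image_iff (affine_injective hρi.ne')).1 hi)
    exact ⟨i :: w, by rw [hw, ← image_comp]; rfl⟩

end IsEquallyGapped

theorem isEquallyGapped_sum_Iio_add_mul {n : ℕ} {ρ : Fin (n + 1) → ℝ} {γ : ℝ} (hρ0 : ∀ i, 0 < ρ i)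
    (hρ1 : ∀ i, ρ i < 1) (hγ : 0 < γ) (hsum : ∑ i, ρ i + n * γ = 1) :
    IsEquallyGapped ρ (fun i => ∑ k ∈ Finset.Iio i, ρ k + (i : ℕ) * γ) γ := by
  have hright : ∀ i, ∑ k ∈ Finset.Iio i, ρ k + (i : ℕ) * γ + ρ i =
      ∑ k ∈ Finset.Iic i, ρ k + (i : ℕ) * γ := fun i => by
    rw [← Finset.sum_Iio_add_eq_sum_Iic]
    ring
  have hρ : ∀ i, 0 ≤ ρ i := fun i => (hρ0 i).le
  refine ⟨hρ0, hρ1, hγ, fun i => ?_, fun i => ?_, ⟨⊥, by simp [bot_eq_zero]⟩, ⟨Fin.last n, ?_⟩,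
    fun i j hij => ?_, fun i hi => ?_⟩
  · exact add_nonneg (Finset.sum_nonneg fun k _ => hρ k) (by positivity)
  · rw [hright]
    have : ((i : ℕ) : ℝ) * γ ≤ n * γ := by gcongr; exact_mod_cast i.is_le
    linarith [Finset.sum_le_univ_sum_of_nonneg (s := Finset.Iic i) hρ]
  · rw [hright, ← Fin.top_eq_last, Finset.Iic_top]
    simpa using hsum
  · rw [hright]
    have : ((i : ℕ) : ℝ) * γ + γ ≤ (j : ℕ) * γ := by
      have : ((i : ℕ) : ℝ) + 1 ≤ (j : ℕ) := by exact_mod_cast hij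
      nlinarith
    have hIic : Finset.Iic i ⊆ Finset.Iio j := fun k hk =>
      Finset.mem_Iio.2 ((Finset.mem_Iic.1 hk).trans_lt hij)
    linarith [Finset.sum_le_sum_of_subset_of_nonneg hIic fun k _ _ => hρ k]
  · have hne : i ≠ Fin.last n := by
      rintro rfl
      rw [hright, ← Fin.top_eq_last, Finset.Iic_top] at hi
      simp [hsum] at hi
    obtain ⟨j, rfl⟩ := Fin.exists_castSucc_eq.2 hne
    refine ⟨j.succ, ?_⟩
    rw [← Fin.orderSucc_castSucc, Finset.Iio_succ_eq_Iic_of_not_isMax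
      (Fin.castSucc_lt_last j).not_isMax, hright, Fin.orderSucc_castSucc, Fin.val_succ,
      Fin.val_castSucc]
    push_cast
    ring

theorem equal_gap_image_general (m : ℕ) (hm : 2 ≤ m) (ρ : Fin m → ℝ)
    (hρ0 : ∀ i, 0 < ρ i) (hρ1 : ∀ i, ρ i < 1) (hsum : ∑ i, ρ i < 1)
    (K : Set ℝ) (hKc : IsCompact K) (hKne : K.Nonempty)
    (φ : Fin m → ℝ → ℝ)
    (hφ : ∀ i x, φ i x = ρ i * x + (∑ k ∈ Finset.univ.filter (· < i), ρ k) +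
        (i : ℕ) * ((1 - ∑ j, ρ j) / (m - 1)))
    (hK : K = ⋃ i, φ i '' K)
    (r t : ℝ) (hr0 : 0 < |r|)
    (hf : (fun x : ℝ => r * x + t) '' K ⊆ K) :
    ∃ w : List (Fin m), (fun x : ℝ => r * x + t) '' K = compWord φ w '' K := by
  obtain ⟨n, rfl⟩ : ∃ n, m = n + 1 := ⟨m - 1, by omega⟩
  have hn : (0 : ℝ) < n := by exact_mod_cast (by omega : 0 < n)
  have hm1 : ((n + 1 : ℕ) : ℝ) - 1 = n := by push_cast; ring
  have hγ : 0 < (1 - ∑ j, ρ j) / ((n + 1 : ℕ) - 1 : ℝ) := by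
    rw [hm1]; exact div_pos (by linarith) hn
  have hIFS := isEquallyGapped_sum_Iio_add_mul hρ0 hρ1 hγ (by rw [hm1]; field_simp; ring)
  obtain rfl : φ = fun i x => ρ i * x +
      (∑ k ∈ Finset.Iio i, ρ k + (i : ℕ) * ((1 - ∑ j, ρ j) / ((n + 1 : ℕ) - 1 : ℝ))) := by
    funext i x
    rw [hφ, Finset.filter_gt_eq_Iio]
    ring
  exact hIFS.exists_word hKc hKne hK (abs_pos.1 hr0) hf

theorem equal_gap_image (m : ℕ) (hm : 2 ≤ m) (ρ : Fin m → ℝ)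
    (hρ0 : ∀ i, 0 < ρ i) (hρ1 : ∀ i, ρ i < 1) (hsum : ∑ i, ρ i < 1)
    (K : Set ℝ) (hKc : IsCompact K) (hKne : K.Nonempty)
    (φ : Fin m → ℝ → ℝ)
    (hφ : ∀ i x, φ i x = ρ i * x + (∑ k ∈ Finset.univ.filter (· < i), ρ k) +
        (i : ℕ) * ((1 - ∑ j, ρ j) / (m - 1)))
    (hK : K = ⋃ i, φ i '' K)
    (r t : ℝ) (hr0 : 0 < |r|) (hr1 : |r| < 1)
    (hf : (fun x : ℝ => r * x + t) '' K ⊆ K) :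
    ∃ w : List (Fin m), (fun x : ℝ => r * x + t) '' K = compWord φ w '' K :=
  equal_gap_image_general m hm ρ hρ0 hρ1 hsum K hKc hKne φ hφ hK r t hr0 hf
end

section
/- Let m ≥ 2, 0 < ρ₁,…,ρ_m < 1 with ρ₁+⋯+ρ_m < 1, γ = (1−Σρᵢ)/(m−1), K the attractor of {φᵢ(x) = ρᵢx + Σ_{k<i}ρ_k + (i−1)γ}. If 1 − K ≠ K and f(x) = rx + t is a contractive similitude with f(K) ⊆ K, then f = φ_{i₁} ∘ ⋯ ∘ φ_{i_n} for some finite word i₁…i_n over {1,…,m}. -/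
/-!
Every point of `[0,1]` lies within `γ/2` of `K`: a point farther away cannot lie in a gap between
two cylinders `φ i [0,1]` (the gaps have length `γ` and endpoints in `K`), so it lies in a cylinder,
and `φ i⁻¹` moves it to a point of `[0,1]` at distance `≥ dist/ρ i` from `K`; this cannot go on
forever. If `f K ⊆ K` with `|r| < 1`, every point of the interval `f [0,1]` is therefore closer than
`γ/2` to `f K ⊆ K`, so `f [0,1]`, whose endpoints lie in `K`, contains no gap between cylinders (the
midpoint of such a gap is `γ/2` away from `K`). Hence `f K` lies in one cylinder, and
`f = φ i ∘ g` with `g K ⊆ K` and ratio `r / ρ i`. The ratio grows geometrically under this peeling,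
so it ends at `|r| = 1`, where `f` is the identity or `x ↦ 1 - x`, and the latter is excluded
because `K` is not symmetric.
-/

open Set

theorem not_of_geometric_descent {α : Type*} {R : ℝ} (hR : R < 1) (size : α → ℝ) {P : α → Prop}
    (hsize : ∀ a, P a → 0 < size a ∧ size a ≤ 1)
    (hstep : ∀ a, P a → ∃ b, P b ∧ size a ≤ R * size b) (a : α) : ¬P a := by
  have hpow : ∀ n : ℕ, ∀ a, P a → size a ≤ R ^ n := by
    intro n
    induction n with
    | zero => simpa using fun a ha => (hsize a ha).2
    | succ n ih =>
      intro a ha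
      obtain ⟨b, hb, hab⟩ := hstep a ha
      have hR0 : 0 ≤ R := by nlinarith [(hsize a ha).1, (hsize b hb).1]
      calc size a ≤ R * size b := hab
        _ ≤ R * R ^ n := mul_le_mul_of_nonneg_left (ih b hb) hR0
        _ = R ^ (n + 1) := (pow_succ' R n).symm
  intro ha
  obtain ⟨n, hn⟩ := exists_pow_lt_of_lt_one (hsize a ha).1 hR
  exact (hpow n a ha).not_gt hn

theorem image_affine_Icc_zero_one (r t : ℝ) :
    (fun x => r * x + t) '' Icc 0 1 = uIcc t (r + t) := by
  rw [← segment_eq_uIcc, segment_eq_image']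
  congr 1
  funext x
  simp only [smul_eq_mul, add_sub_cancel_right]
  ring

theorem abs_le_one_of_mem_Icc {r t : ℝ} (ht : t ∈ Icc (0 : ℝ) 1) (hrt : r + t ∈ Icc (0 : ℝ) 1) :
    |r| ≤ 1 :=
  abs_le.2 ⟨by linarith [ht.2, hrt.1], by linarith [ht.1, hrt.2]⟩

theorem eq_one_and_eq_zero_or_of_mem_Icc {r t : ℝ} (ht : t ∈ Icc (0 : ℝ) 1)
    (hrt : r + t ∈ Icc (0 : ℝ) 1) (hr : |r| = 1) : r = 1 ∧ t = 0 ∨ r = -1 ∧ t = 1 := by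
  rcases (abs_eq zero_le_one).1 hr with rfl | rfl
  · exact .inl ⟨rfl, by linarith [ht.1, hrt.2]⟩
  · exact .inr ⟨rfl, by linarith [ht.2, hrt.1]⟩

/-- `c i` is the left end of the cylinder `[c i, c i + ρ i]`, the image of `[0,1]` under
`x ↦ ρ i * x + c i`. -/
structure IsEqualGapLayout {n : ℕ} (ρ c : Fin (n + 1) → ℝ) (γ : ℝ) : Prop where
  pos : ∀ i, 0 < ρ i
  lt_one : ∀ i, ρ i < 1
  gap_pos : 0 < γ
  first : c 0 = 0
  last : c (Fin.last n) + ρ (Fin.last n) = 1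
  succ : ∀ i : Fin n, c i.succ = c i.castSucc + ρ i.castSucc + γ

namespace IsEqualGapLayout

variable {n : ℕ} {ρ c : Fin (n + 1) → ℝ} {γ : ℝ}

theorem add_gap_le (L : IsEqualGapLayout ρ c γ) {i j : Fin (n + 1)} (hij : i < j) :
    c i + ρ i + γ ≤ c j := by
  induction j using Fin.induction with
  | zero => exact absurd hij (Fin.not_lt_zero i)
  | succ k ih =>
    rw [L.succ k]
    rcases (Fin.le_castSucc_iff.mpr hij).lt_or_eq with h | rfl
    · linarith [ih h, L.pos k.castSucc, L.gap_pos]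
    · exact le_rfl

theorem nonneg (L : IsEqualGapLayout ρ c γ) (i : Fin (n + 1)) : 0 ≤ c i := by
  rcases (Fin.zero_le i).eq_or_lt with rfl | h
  · exact L.first.ge
  · linarith [L.add_gap_le h, L.first, L.pos 0, L.gap_pos]

theorem add_le_one (L : IsEqualGapLayout ρ c γ) (i : Fin (n + 1)) : c i + ρ i ≤ 1 := by
  rcases (Fin.le_last i).lt_or_eq with h | rfl
  · linarith [L.add_gap_le h, L.last, L.pos (Fin.last n), L.gap_pos]
  · exact L.last.le

theorem eq_of_mem_Icc (L : IsEqualGapLayout ρ c γ) {i j : Fin (n + 1)} {y : ℝ}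
    (hi : y ∈ Icc (c i) (c i + ρ i)) (hj : y ∈ Icc (c j) (c j + ρ j)) : i = j := by
  rcases lt_trichotomy i j with h | h | h
  · linarith [L.add_gap_le h, hi.1, hi.2, hj.1, L.gap_pos]
  · exact h
  · linarith [L.add_gap_le h, hi.1, hj.2, L.gap_pos]

theorem exists_lt_one_forall_le (L : IsEqualGapLayout ρ c γ) : ∃ R < 1, ∀ i, ρ i ≤ R :=
  ⟨Finset.univ.sup' Finset.univ_nonempty ρ, (Finset.sup'_lt_iff _).2 fun i _ => L.lt_one i,
    fun i => Finset.le_sup' ρ (Finset.mem_univ i)⟩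

end IsEqualGapLayout

theorem isEqualGapLayout_partialSums {n : ℕ} {ρ : Fin (n + 1) → ℝ} {γ : ℝ} (hρ : ∀ i, 0 < ρ i)
    (hsum : ∑ i, ρ i < 1) (hγ : n * γ = 1 - ∑ i, ρ i) :
    IsEqualGapLayout ρ (fun i => ∑ k ∈ Finset.univ.filter (· < i), ρ k + (i : ℕ) * γ) γ where
  pos := hρ
  lt_one i := (Finset.single_le_sum (fun j _ => (hρ j).le) (Finset.mem_univ i)).trans_lt hsum
  gap_pos := pos_of_mul_pos_right (hγ ▸ sub_pos.2 hsum) n.cast_nonneg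
  first := by simp
  last := by
    have hIic : Finset.Iic (Fin.last n) = Finset.univ := by ext j; simp [Fin.le_last]
    rw [Finset.filter_gt_eq_Iio, Fin.val_last, add_right_comm, Finset.sum_Iio_add_eq_sum_Iic,
      hIic, hγ, add_sub_cancel]
  succ k := by
    have hIio : Finset.Iio k.succ = Finset.Iic k.castSucc := by
      ext j; simp [Fin.lt_def, Fin.le_def]
    simp only [Finset.filter_gt_eq_Iio, hIio, ← Finset.sum_Iio_add_eq_sum_Iic, Fin.val_succ,
      Fin.val_castSucc]
    push_cast
    ring

structure IsEqualGapAttractor {n : ℕ} (ρ c : Fin (n + 1) → ℝ) (γ : ℝ) (K : Set ℝ) : Prop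
    extends IsEqualGapLayout ρ c γ where
  isCompact : IsCompact K
  nonempty : K.Nonempty
  eq_iUnion : K = ⋃ i, (fun x => ρ i * x + c i) '' K

namespace IsEqualGapAttractor

variable {n : ℕ} {ρ c : Fin (n + 1) → ℝ} {γ : ℝ} {K : Set ℝ}

theorem mapsTo (hA : IsEqualGapAttractor ρ c γ K) (i : Fin (n + 1)) :
    MapsTo (fun x => ρ i * x + c i) K K := by
  intro x hx
  rw [hA.eq_iUnion]
  exact mem_iUnion_of_mem i (mem_image_of_mem _ hx)

theorem exists_eq_of_mem (hA : IsEqualGapAttractor ρ c γ K) {y : ℝ} (hy : y ∈ K) :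
    ∃ i, ∃ x ∈ K, ρ i * x + c i = y := by
  rw [hA.eq_iUnion] at hy
  simpa using hy

theorem sInf_eq_zero (hA : IsEqualGapAttractor ρ c γ K) : sInf K = 0 := by
  have hmem := hA.isCompact.sInf_mem hA.nonempty
  have hle : ∀ x ∈ K, sInf K ≤ x := fun x hx => csInf_le hA.isCompact.bddBelow hx
  apply le_antisymm
  · have := hle _ (hA.mapsTo 0 hmem)
    simp only [hA.first, add_zero] at this
    nlinarith [hA.lt_one 0]
  · obtain ⟨i, x, hx, hxy⟩ := hA.exists_eq_of_mem hmem
    nlinarith [hle x hx, hA.pos i, hA.lt_one i, hA.nonneg i]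

theorem sSup_eq_one (hA : IsEqualGapAttractor ρ c γ K) : sSup K = 1 := by
  have hmem := hA.isCompact.sSup_mem hA.nonempty
  have hle : ∀ x ∈ K, x ≤ sSup K := fun x hx => le_csSup hA.isCompact.bddAbove hx
  apply le_antisymm
  · obtain ⟨i, x, hx, hxy⟩ := hA.exists_eq_of_mem hmem
    nlinarith [hle x hx, hA.pos i, hA.lt_one i, hA.add_le_one i]
  · have := hle _ (hA.mapsTo (Fin.last n) hmem)
    nlinarith [hA.lt_one (Fin.last n), hA.last]

theorem subset_Icc (hA : IsEqualGapAttractor ρ c γ K) : K ⊆ Icc 0 1 := fun _ hx =>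
  ⟨hA.sInf_eq_zero ▸ csInf_le hA.isCompact.bddBelow hx,
    hA.sSup_eq_one ▸ le_csSup hA.isCompact.bddAbove hx⟩

theorem zero_mem (hA : IsEqualGapAttractor ρ c γ K) : (0 : ℝ) ∈ K :=
  hA.sInf_eq_zero ▸ hA.isCompact.sInf_mem hA.nonempty

theorem one_mem (hA : IsEqualGapAttractor ρ c γ K) : (1 : ℝ) ∈ K :=
  hA.sSup_eq_one ▸ hA.isCompact.sSup_mem hA.nonempty

theorem left_mem (hA : IsEqualGapAttractor ρ c γ K) (i : Fin (n + 1)) : c i ∈ K := by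
  simpa using hA.mapsTo i hA.zero_mem

theorem right_mem (hA : IsEqualGapAttractor ρ c γ K) (i : Fin (n + 1)) : c i + ρ i ∈ K := by
  simpa [add_comm] using hA.mapsTo i hA.one_mem

theorem apply_mem_Icc (hA : IsEqualGapAttractor ρ c γ K) (i : Fin (n + 1)) {x : ℝ} (hx : x ∈ K) :
    ρ i * x + c i ∈ Icc (c i) (c i + ρ i) := by
  obtain ⟨h0, h1⟩ := hA.subset_Icc hx
  constructor <;> nlinarith [hA.pos i]

theorem exists_mem_Icc (hA : IsEqualGapAttractor ρ c γ K) {y : ℝ} (hy : y ∈ K) :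
    ∃ i, y ∈ Icc (c i) (c i + ρ i) := by
  obtain ⟨i, x, hx, rfl⟩ := hA.exists_eq_of_mem hy
  exact ⟨i, hA.apply_mem_Icc i hx⟩

theorem exists_eq_of_mem_Icc (hA : IsEqualGapAttractor ρ c γ K) {y : ℝ} (hy : y ∈ K)
    {i : Fin (n + 1)} (hi : y ∈ Icc (c i) (c i + ρ i)) : ∃ x ∈ K, ρ i * x + c i = y := by
  obtain ⟨j, x, hx, rfl⟩ := hA.exists_eq_of_mem hy
  obtain rfl := hA.eq_of_mem_Icc (hA.apply_mem_Icc j hx) hi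
  exact ⟨x, hx, rfl⟩

theorem le_or_add_le (hA : IsEqualGapAttractor ρ c γ K) (i : Fin (n + 1)) {x : ℝ} (hx : x ∈ K) :
    x ≤ c i + ρ i ∨ c i + ρ i + γ ≤ x := by
  obtain ⟨j, hj⟩ := hA.exists_mem_Icc hx
  rcases lt_or_ge i j with h | h
  · exact .inr ((hA.add_gap_le h).trans hj.1)
  rcases h.lt_or_eq with h | rfl
  · exact .inl (by linarith [hA.add_gap_le h, hj.2, hA.pos i, hA.gap_pos])
  · exact .inl hj.2

theorem exists_mem_Icc_or_abs_sub_le (hA : IsEqualGapAttractor ρ c γ K) {y : ℝ}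
    (hy : y ∈ Icc 0 1) : (∃ i, y ∈ Icc (c i) (c i + ρ i)) ∨ ∃ x ∈ K, |y - x| ≤ γ / 2 := by
  suffices h : ∀ i, c i ≤ y → (∃ i, y ∈ Icc (c i) (c i + ρ i)) ∨ ∃ x ∈ K, |y - x| ≤ γ / 2 from
    h 0 (hA.first ▸ hy.1)
  intro i
  induction i using Fin.reverseInduction with
  | last => exact fun h => .inl ⟨_, h, hA.last ▸ hy.2⟩
  | cast k ih =>
    intro hk
    by_cases h₁ : y ≤ c k.castSucc + ρ k.castSucc
    · exact .inl ⟨_, hk, h₁⟩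
    by_cases h₂ : c k.succ ≤ y
    · exact ih h₂
    rw [hA.succ] at h₂
    right
    rcases le_total y (c k.castSucc + ρ k.castSucc + γ / 2) with h | h
    · exact ⟨_, hA.right_mem k.castSucc, abs_le.2 ⟨by linarith, by linarith⟩⟩
    · exact ⟨_, hA.left_mem k.succ, by rw [hA.succ]; exact abs_le.2 ⟨by linarith, by linarith⟩⟩

theorem exists_abs_sub_lt (hA : IsEqualGapAttractor ρ c γ K) {y : ℝ} (hy : y ∈ Icc 0 1) {ε : ℝ}
    (hε : γ / 2 < ε) : ∃ x ∈ K, |y - x| < ε := by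
  obtain ⟨R, hR, hρR⟩ := hA.exists_lt_one_forall_le
  by_contra! hfar
  refine not_of_geometric_descent hR Prod.snd
    (P := fun p : ℝ × ℝ => p.1 ∈ Icc 0 1 ∧ γ / 2 < p.2 ∧ ∀ x ∈ K, p.2 ≤ |p.1 - x|) ?_ ?_
    (y, ε) ⟨hy, hε, hfar⟩
  · rintro ⟨y, ε⟩ ⟨hy, hε, hfar⟩
    have := hfar 0 hA.zero_mem
    rw [sub_zero, abs_of_nonneg hy.1] at this
    exact ⟨by linarith [hA.gap_pos], this.trans hy.2⟩
  rintro ⟨y, ε⟩ ⟨hy, hε, hfar⟩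
  -- a point farther than `γ / 2` from `K` lies in a cylinder, and `φ i⁻¹` moves it farther away
  obtain ⟨i, hi⟩ | ⟨x, hx, hxy⟩ := hA.exists_mem_Icc_or_abs_sub_le hy
  · have hρ := hA.pos i
    refine ⟨((y - c i) / ρ i, ε / ρ i), ⟨?_, ?_, fun x hx => ?_⟩, ?_⟩
    · exact ⟨div_nonneg (by linarith [hi.1]) hρ.le, (div_le_one hρ).2 (by linarith [hi.2])⟩
    · exact hε.trans_le (le_div_self (by linarith [hA.gap_pos]) hρ (hA.lt_one i).le)
    · rw [show (y - c i) / ρ i - x = (y - (ρ i * x + c i)) / ρ i by field_simp; ring, abs_div,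
        abs_of_pos hρ]
      exact div_le_div_of_nonneg_right (hfar _ (hA.mapsTo i hx)) hρ.le
    · show ε ≤ R * (ε / ρ i)
      rw [mul_div_assoc', le_div_iff₀ hρ]
      nlinarith [hρR i, hA.gap_pos]
  · linarith [hfar x hx]

theorem exists_uIcc_subset_Icc (hA : IsEqualGapAttractor ρ c γ K) {u v : ℝ} (hu : u ∈ K)
    (hv : v ∈ K) (hnear : ∀ y ∈ uIcc u v, ∃ x ∈ K, |y - x| < γ / 2) :
    ∃ i, uIcc u v ⊆ Icc (c i) (c i + ρ i) := by
  wlog huv : u ≤ v generalizing u v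
  · rw [uIcc_comm] at hnear ⊢
    exact this hv hu hnear (le_of_not_ge huv)
  rw [uIcc_of_le huv] at hnear ⊢
  obtain ⟨i, hi⟩ := hA.exists_mem_Icc hu
  refine ⟨i, Icc_subset_Icc hi.1 (not_lt.1 fun hvi => ?_)⟩
  -- then `[u, v]` contains the gap after cylinder `i`, whose midpoint is `γ / 2` away from `K`
  have hv' := (hA.le_or_add_le i hv).resolve_left hvi.not_ge
  obtain ⟨x, hx, hxy⟩ := hnear (c i + ρ i + γ / 2)
    ⟨by linarith [hi.2, hA.gap_pos], by linarith [hA.gap_pos]⟩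
  rw [abs_lt] at hxy
  rcases hA.le_or_add_le i hx with h | h <;> linarith [hxy.1, hxy.2]

theorem exists_image_subset_Icc (hA : IsEqualGapAttractor ρ c γ K) {r t : ℝ} (hr : r ≠ 0)
    (hr1 : |r| < 1) (hf : MapsTo (fun x => r * x + t) K K) :
    ∃ i, (fun x => r * x + t) '' K ⊆ Icc (c i) (c i + ρ i) := by
  have h0 : t ∈ K := by simpa using hf hA.zero_mem
  have h1 : r + t ∈ K := by simpa using hf hA.one_mem
  have hnear : ∀ y ∈ uIcc t (r + t), ∃ x ∈ K, |y - x| < γ / 2 := by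
    rw [← image_affine_Icc_zero_one]
    rintro _ ⟨z, hz, rfl⟩
    have hr0 : 0 < |r| := abs_pos.2 hr
    obtain ⟨x, hx, hzx⟩ := hA.exists_abs_sub_lt hz (ε := γ / 2 / |r|)
      ((lt_div_iff₀ hr0).2 (by nlinarith [hA.gap_pos]))
    refine ⟨_, hf hx, ?_⟩
    calc |r * z + t - (r * x + t)| = |r| * |z - x| := by rw [← abs_mul]; ring_nf
      _ < |r| * (γ / 2 / |r|) := mul_lt_mul_of_pos_left hzx hr0
      _ = γ / 2 := mul_div_cancel₀ _ hr0.ne'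
  obtain ⟨i, hi⟩ := hA.exists_uIcc_subset_Icc h0 h1 hnear
  rw [← image_affine_Icc_zero_one] at hi
  exact ⟨i, (image_mono hA.subset_Icc).trans hi⟩

theorem exists_eq_comp_of_abs_lt_one (hA : IsEqualGapAttractor ρ c γ K) {r t : ℝ} (hr : r ≠ 0)
    (hr1 : |r| < 1) (hf : MapsTo (fun x => r * x + t) K K) :
    ∃ i r' t', MapsTo (fun x => r' * x + t') K K ∧ r = ρ i * r' ∧
      ∀ x, r * x + t = ρ i * (r' * x + t') + c i := by
  obtain ⟨i, hi⟩ := hA.exists_image_subset_Icc hr hr1 hf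
  have hρ := (hA.pos i).ne'
  refine ⟨i, r / ρ i, (t - c i) / ρ i, fun x hx => ?_, by field_simp, fun x => by field_simp; ring⟩
  obtain ⟨z, hz, hzx⟩ := hA.exists_eq_of_mem_Icc (hf hx) (hi (mem_image_of_mem _ hx))
  convert hz using 1
  field_simp
  linarith

theorem mem_Icc_of_mapsTo (hA : IsEqualGapAttractor ρ c γ K) {r t : ℝ}
    (hf : MapsTo (fun x => r * x + t) K K) : t ∈ Icc 0 1 ∧ r + t ∈ Icc 0 1 :=
  ⟨hA.subset_Icc (by simpa using hf hA.zero_mem), hA.subset_Icc (by simpa using hf hA.one_mem)⟩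

theorem exists_compWord_eq (hA : IsEqualGapAttractor ρ c γ K)
    (hsym : (fun x : ℝ => 1 - x) '' K ≠ K) {r t : ℝ} (hr : r ≠ 0)
    (hf : MapsTo (fun x => r * x + t) K K) :
    ∃ w : List (Fin (n + 1)), ∀ x, r * x + t = compWord (fun i x => ρ i * x + c i) w x := by
  obtain ⟨R, hR, hρR⟩ := hA.exists_lt_one_forall_le
  by_contra hw
  refine not_of_geometric_descent hR (fun p : ℝ × ℝ => |p.1|)
    (P := fun p => p.1 ≠ 0 ∧ MapsTo (fun x => p.1 * x + p.2) K K ∧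
      ¬∃ w : List (Fin (n + 1)), ∀ x, p.1 * x + p.2 = compWord (fun i x => ρ i * x + c i) w x)
    ?_ ?_ (r, t) ⟨hr, hf, hw⟩
  · rintro ⟨r, t⟩ ⟨hr, hf, -⟩
    obtain ⟨ht, hrt⟩ := hA.mem_Icc_of_mapsTo hf
    exact ⟨abs_pos.2 hr, abs_le_one_of_mem_Icc ht hrt⟩
  rintro ⟨r, t⟩ ⟨hr, hf, hw⟩
  obtain ⟨ht, hrt⟩ := hA.mem_Icc_of_mapsTo hf
  have hr1 : |r| < 1 := by
    refine (abs_le_one_of_mem_Icc ht hrt).lt_of_ne fun h1 => ?_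
    rcases eq_one_and_eq_zero_or_of_mem_Icc ht hrt h1 with ⟨rfl, rfl⟩ | ⟨rfl, rfl⟩
    · exact hw ⟨[], fun x => by simp [compWord]⟩
    · have hrefl : MapsTo (fun x : ℝ => 1 - x) K K := fun x hx => by
        simpa [neg_add_eq_sub] using hf hx
      exact hsym (hrefl.image_subset.antisymm fun x hx => ⟨1 - x, hrefl hx, sub_sub_cancel 1 x⟩)
  obtain ⟨i, r', t', hg, rfl, hfac⟩ := hA.exists_eq_comp_of_abs_lt_one hr hr1 hf
  refine ⟨(r', t'), ⟨right_ne_zero_of_mul hr, hg, fun ⟨w, hw'⟩ => hw ⟨i :: w, fun x => ?_⟩⟩, ?_⟩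
  · rw [hfac x, hw' x]
    rfl
  · show |ρ i * r'| ≤ R * |r'|
    rw [abs_mul, abs_of_pos (hA.pos i)]
    exact mul_le_mul_of_nonneg_right (hρR i) (abs_nonneg _)

end IsEqualGapAttractor

theorem equal_gap_nonsymmetric_general (m : ℕ) (hm : 2 ≤ m) (ρ : Fin m → ℝ)
    (hρ0 : ∀ i, 0 < ρ i) (hsum : ∑ i, ρ i < 1)
    (K : Set ℝ) (hKc : IsCompact K) (hKne : K.Nonempty)
    (φ : Fin m → ℝ → ℝ)
    (hφ : ∀ i x, φ i x = ρ i * x + (∑ k ∈ Finset.univ.filter (· < i), ρ k) +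
        (i : ℕ) * ((1 - ∑ j, ρ j) / (m - 1)))
    (hK : K = ⋃ i, φ i '' K)
    (hsym : (fun x : ℝ => 1 - x) '' K ≠ K)
    (r t : ℝ) (hr0 : 0 < |r|)
    (hf : (fun x : ℝ => r * x + t) '' K ⊆ K) :
    ∃ w : List (Fin m), ∀ x : ℝ, r * x + t = compWord φ w x := by
  obtain ⟨n, rfl⟩ : ∃ n, m = n + 1 := ⟨m - 1, by omega⟩
  set γ : ℝ := (1 - ∑ j, ρ j) / ((n + 1 : ℕ) - 1 : ℝ)
  have hγ : n * γ = 1 - ∑ j, ρ j := by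
    have : (n : ℝ) ≠ 0 := by exact_mod_cast (by omega : n ≠ 0)
    simp only [γ, Nat.cast_add_one, add_sub_cancel_right]
    field_simp
  obtain rfl : φ = fun i x => ρ i * x + (∑ k ∈ Finset.univ.filter (· < i), ρ k + (i : ℕ) * γ) := by
    funext i x
    rw [hφ, add_assoc]
  have hA : IsEqualGapAttractor ρ _ γ K :=
    ⟨isEqualGapLayout_partialSums hρ0 hsum hγ, hKc, hKne, hK⟩
  exact hA.exists_compWord_eq hsym (abs_pos.1 hr0) (mapsTo_iff_image_subset.2 hf)

theorem equal_gap_nonsymmetric (m : ℕ) (hm : 2 ≤ m) (ρ : Fin m → ℝ)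
    (hρ0 : ∀ i, 0 < ρ i) (hρ1 : ∀ i, ρ i < 1) (hsum : ∑ i, ρ i < 1)
    (K : Set ℝ) (hKc : IsCompact K) (hKne : K.Nonempty)
    (φ : Fin m → ℝ → ℝ)
    (hφ : ∀ i x, φ i x = ρ i * x + (∑ k ∈ Finset.univ.filter (· < i), ρ k) +
        (i : ℕ) * ((1 - ∑ j, ρ j) / (m - 1)))
    (hK : K = ⋃ i, φ i '' K)
    (hsym : (fun x : ℝ => 1 - x) '' K ≠ K)
    (r t : ℝ) (hr0 : 0 < |r|) (hr1 : |r| < 1)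
    (hf : (fun x : ℝ => r * x + t) '' K ⊆ K) :
    ∃ w : List (Fin m), ∀ x : ℝ, r * x + t = compWord φ w x :=
  equal_gap_nonsymmetric_general m hm ρ hρ0 hsum K hKc hKne φ hφ hK hsym r t hr0 hf
end

section
/- Let m ≥ 2, 0 < ρ₁,…,ρ_m < 1 with ρ₁+⋯+ρ_m < 1, γ = (1−Σρᵢ)/(m−1), K the attractor of {φᵢ(x) = ρᵢx + Σ_{k<i}ρ_k + (i−1)γ}. If 1 − K = K and f(x) = rx + t is a contractive similitude with f(K) ⊆ K, then either f = φ_{i₁}∘⋯∘φ_{i_n} or f(x) = φ_{i₁}∘⋯∘φ_{i_n}(1−x) for some finite word i₁…i_n over {1,…,m}. -/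
set_option maxHeartbeats 1000000 in
theorem equal_gap_symmetric (m : ℕ) (hm : 2 ≤ m) (ρ : Fin m → ℝ)
    (hρ0 : ∀ i, 0 < ρ i) (hρ1 : ∀ i, ρ i < 1) (hsum : ∑ i, ρ i < 1)
    (K : Set ℝ) (hKc : IsCompact K) (hKne : K.Nonempty)
    (φ : Fin m → ℝ → ℝ)
    (hφ : ∀ i x, φ i x = ρ i * x + (∑ k ∈ Finset.univ.filter (· < i), ρ k) +
        (i : ℕ) * ((1 - ∑ j, ρ j) / (m - 1)))
    (hK : K = ⋃ i, φ i '' K)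
    (hsym : (fun x : ℝ => 1 - x) '' K = K)
    (r t : ℝ) (hr0 : 0 < |r|) (hr1 : |r| < 1)
    (hf : (fun x : ℝ => r * x + t) '' K ⊆ K) :
    ∃ w : List (Fin m),
      (∀ x : ℝ, r * x + t = compWord φ w x) ∨
      (∀ x : ℝ, r * x + t = compWord φ w (1 - x)) := by
  -- notation
  set R : ℝ := ∑ i, ρ i with hR
  have hR0 : 0 < R := Finset.sum_pos (fun i _ => hρ0 i) ⟨⟨0, by omega⟩, Finset.mem_univ _⟩
  have hρR : ∀ i, ρ i ≤ R := by
    intro i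
    exact Finset.single_le_sum (fun j _ => (hρ0 j).le) (Finset.mem_univ i)
  set γ : ℝ := (1 - R) / (↑m - 1) with hγdef
  have hm1 : (1:ℝ) ≤ (m:ℝ) - 1 := by
    have : (2:ℝ) ≤ (m:ℝ) := by exact_mod_cast hm
    linarith
  have hγ : 0 < γ := div_pos (by linarith) (by linarith)
  set S : Fin m → ℝ := fun i => ∑ k ∈ Finset.univ.filter (· < i), ρ k with hSdef
  set a : Fin m → ℝ := fun i => S i + (i : ℕ) * γ with hadef
  have hφ' : ∀ i x, φ i x = ρ i * x + a i := by
    intro i x; rw [hφ]; simp [hadef, hSdef]; ring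
  -- basic sum facts
  have hS0 : S ⟨0, by omega⟩ = 0 := by
    simp only [hSdef]
    convert Finset.sum_empty
    ext k
    simp [Fin.lt_def]
  have hSsucc : ∀ (i : Fin m) (h : i.val + 1 < m), S ⟨i.val + 1, h⟩ = S i + ρ i := by
    intro i h
    simp only [hSdef]
    have he : Finset.univ.filter (· < (⟨i.val + 1, h⟩ : Fin m))
        = insert i (Finset.univ.filter (· < i)) := by
      ext k
      simp only [Finset.mem_filter, Finset.mem_univ, true_and, Finset.mem_insert,
        Fin.lt_def, Fin.ext_iff, Fin.val_mk]
      omega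
    have hni : i ∉ Finset.univ.filter (· < i) := by
      simp only [Finset.mem_filter, Finset.mem_univ, true_and]
      exact lt_irrefl i
    rw [he, Finset.sum_insert hni]
    ring
  have hStot : S ⟨m - 1, by omega⟩ + ρ ⟨m - 1, by omega⟩ = R := by
    simp only [hSdef, hR]
    have he : (Finset.univ : Finset (Fin m))
        = insert (⟨m - 1, by omega⟩ : Fin m)
          (Finset.univ.filter (· < (⟨m - 1, by omega⟩ : Fin m))) := by
      ext k
      simp only [Finset.mem_filter, Finset.mem_univ, true_and, Finset.mem_insert,
        Fin.lt_def, Fin.ext_iff, Fin.val_mk]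
      have hk := k.isLt
      refine ⟨fun _ => ?_, fun _ => trivial⟩
      omega
    have hni : (⟨m - 1, by omega⟩ : Fin m)
        ∉ Finset.univ.filter (· < (⟨m - 1, by omega⟩ : Fin m)) := by
      simp only [Finset.mem_filter, Finset.mem_univ, true_and]
      exact lt_irrefl _
    conv_rhs => rw [he]
    rw [Finset.sum_insert hni]
    ring
  have hSmono : ∀ i j : Fin m, i ≤ j → S i ≤ S j := by
    intro i j hij
    apply Finset.sum_le_sum_of_subset_of_nonneg
    · intro k hk
      simp only [Finset.mem_filter, Finset.mem_univ, true_and] at *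
      exact lt_of_lt_of_le hk hij
    · exact fun k _ _ => (hρ0 k).le
  have hSlt : ∀ i j : Fin m, i < j → S i + ρ i ≤ S j := by
    intro i j hij
    have h1 : i.val + 1 ≤ j.val := hij
    have h2 : i.val + 1 < m := lt_of_le_of_lt h1 j.isLt
    rw [← hSsucc i h2]
    exact hSmono _ _ h1
  have hSnn : ∀ i, 0 ≤ S i := fun i => Finset.sum_nonneg fun k _ => (hρ0 k).le
  have hSb : ∀ i : Fin m, S i + ρ i ≤ R := by
    intro i
    have : S i + ρ i = ∑ k ∈ insert i (Finset.univ.filter (· < i)), ρ k := by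
      rw [Finset.sum_insert (by simp)]
      ring
    rw [this]
    apply Finset.sum_le_sum_of_subset_of_nonneg (Finset.subset_univ _)
      (fun k _ _ => (hρ0 k).le)
  -- facts about a
  have ha0 : a ⟨0, by omega⟩ = 0 := by simp [hadef, hS0]
  have hasucc : ∀ (i : Fin m) (h : i.val + 1 < m),
      a ⟨i.val + 1, h⟩ = a i + ρ i + γ := by
    intro i h
    simp only [hadef, hSsucc i h]
    push_cast
    ring
  have hann : ∀ i, 0 ≤ a i := by
    intro i
    have : (0:ℝ) ≤ (i:ℕ) * γ := by positivity
    simp only [hadef]; linarith [hSnn i]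
  have hblast : a ⟨m - 1, by omega⟩ + ρ ⟨m - 1, by omega⟩ = 1 := by
    simp only [hadef]
    have hc2 : ((m - 1 : ℕ) : ℝ) = (m : ℝ) - 1 := by
      have : 1 ≤ m := by omega
      push_cast [this]; ring
    rw [hc2]
    have : ((m:ℝ) - 1) * γ = 1 - R := by
      rw [hγdef]; field_simp
    linarith [hStot]
  have hb1 : ∀ i : Fin m, a i + ρ i ≤ 1 := by
    intro i
    have h1 : (i : ℕ) ≤ m - 1 := by omega
    have h2 : ((i:ℕ) : ℝ) ≤ (m:ℝ) - 1 := by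
      calc ((i:ℕ) : ℝ) ≤ ((m - 1 : ℕ) : ℝ) := by exact_mod_cast h1
        _ = (m:ℝ) - 1 := by push_cast [show 1 ≤ m by omega]; ring
    have h3 : ((i:ℕ):ℝ) * γ ≤ ((m:ℝ) - 1) * γ := by nlinarith
    have h4 : ((m:ℝ) - 1) * γ = 1 - R := by rw [hγdef]; field_simp
    simp only [hadef]
    linarith [hSb i]
  have hmono : ∀ i j : Fin m, i < j → a i + ρ i + γ ≤ a j := by
    intro i j hij
    have h1 : S i + ρ i ≤ S j := hSlt i j hij
    have h2 : ((i:ℕ):ℝ) + 1 ≤ ((j:ℕ):ℝ) := by exact_mod_cast hij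
    simp only [hadef]
    nlinarith
  -- membership machinery
  have hsub : ∀ i, φ i '' K ⊆ K := by
    intro i x hx; rw [hK]; exact Set.mem_iUnion.2 ⟨i, hx⟩
  have hcases : ∀ x ∈ K, ∃ i, ∃ y ∈ K, x = φ i y := by
    intro x hx
    rw [hK] at hx
    obtain ⟨i, y, hy, hxy⟩ := Set.mem_iUnion.1 hx
    exact ⟨i, y, hy, hxy.symm⟩
  -- K ⊆ [0,1]
  have hK01 : K ⊆ Set.Icc (0:ℝ) 1 := by
    have hbdd := hKc.bddAbove
    have hbdd' := hKc.bddBelow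
    have hMmem : sSup K ∈ K := hKc.sSup_mem hKne
    have hmmem : sInf K ∈ K := hKc.sInf_mem hKne
    have hM1 : sSup K ≤ 1 := by
      obtain ⟨i, y, hy, hxy⟩ := hcases _ hMmem
      have hyM : y ≤ sSup K := le_csSup hbdd hy
      have h1 : sSup K = ρ i * y + a i := by rw [hxy, hφ']
      have h2 := hb1 i
      nlinarith [hρ0 i, hρ1 i]
    have hm0 : 0 ≤ sInf K := by
      obtain ⟨i, y, hy, hxy⟩ := hcases _ hmmem
      have hyM : sInf K ≤ y := csInf_le hbdd' hy
      have h1 : sInf K = ρ i * y + a i := by rw [hxy, hφ']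
      have h2 := hann i
      nlinarith [hρ0 i, hρ1 i]
    intro x hx
    exact ⟨le_trans hm0 (csInf_le hbdd' hx), le_trans (le_csSup hbdd hx) hM1⟩
  have h0K : (0:ℝ) ∈ K := by
    have hmmem : sInf K ∈ K := hKc.sInf_mem hKne
    have h1 : φ ⟨0, by omega⟩ (sInf K) ∈ K := hsub _ ⟨_, hmmem, rfl⟩
    have h2 : φ ⟨0, by omega⟩ (sInf K) = ρ ⟨0, by omega⟩ * sInf K := by
      rw [hφ', ha0]; ring
    have h3 : sInf K ≤ ρ ⟨0, by omega⟩ * sInf K := csInf_le hKc.bddBelow (h2 ▸ h1)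
    have h4 : 0 ≤ sInf K := (hK01 hmmem).1
    have h5 : sInf K = 0 := by nlinarith [hρ1 ⟨0, by omega⟩, hρ0 ⟨0, by omega⟩]
    rwa [h5] at hmmem
  have h1K : (1:ℝ) ∈ K := by
    have hMmem : sSup K ∈ K := hKc.sSup_mem hKne
    have h1 : φ ⟨m - 1, by omega⟩ (sSup K) ∈ K := hsub _ ⟨_, hMmem, rfl⟩
    have h2 : φ ⟨m - 1, by omega⟩ (sSup K)
        = ρ ⟨m - 1, by omega⟩ * sSup K + a ⟨m - 1, by omega⟩ := hφ' _ _
    have h3 : ρ ⟨m - 1, by omega⟩ * sSup K + a ⟨m - 1, by omega⟩ ≤ sSup K :=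
      le_csSup hKc.bddAbove (h2 ▸ h1)
    have h4 : sSup K ≤ 1 := (hK01 hMmem).2
    have h5 : sSup K = 1 := by
      nlinarith [hρ0 ⟨m - 1, (by omega : m - 1 < m)⟩, hρ1 ⟨m - 1, (by omega : m - 1 < m)⟩, hblast]
    rwa [h5] at hMmem
  -- piece bounds
  have hpiece : ∀ (i : Fin m), ∀ x ∈ K, a i ≤ φ i x ∧ φ i x ≤ a i + ρ i := by
    intro i x hx
    obtain ⟨hx0, hx1⟩ := hK01 hx
    rw [hφ' i x]
    constructor
    · have := mul_nonneg (hρ0 i).le hx0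
      linarith
    · have := mul_le_mul_of_nonneg_left hx1 (hρ0 i).le
      linarith
  -- no point of K in a level-1 gap
  have hgapA : ∀ (i : Fin m), ∀ x ∈ K, ¬(a i + ρ i < x ∧ x < a i + ρ i + γ) := by
    rintro i x hx ⟨hlo, hhi⟩
    obtain ⟨j, y, hy, hxy⟩ := hcases x hx
    obtain ⟨hj1, hj2⟩ := hpiece j y hy
    rw [← hxy] at hj1 hj2
    rcases lt_trichotomy j i with h | h | h
    · have := hmono j i h
      linarith [hγ, (hρ0 i).le]
    · subst h; linarith
    · have := hmono i j h
      linarith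
  -- Lemma A: any interval of length > γ in [0,1] meets K
  have haK : ∀ i : Fin m, a i ∈ K := by
    intro i
    have h1 := hsub i ⟨0, h0K, rfl⟩
    rwa [hφ' i 0, mul_zero, zero_add] at h1
  have hbK : ∀ i : Fin m, a i + ρ i ∈ K := by
    intro i
    have h1 := hsub i ⟨1, h1K, rfl⟩
    rw [hφ' i 1, mul_one, add_comm] at h1
    exact h1
  have hgapfull : ∀ n : ℕ, ∀ u v : ℝ, 0 ≤ u → v ≤ 1 → γ < v - u → R ^ n < v - u →
      ∃ x ∈ K, u < x ∧ x < v := by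
    intro n
    induction n with
    | zero =>
      intro u v hu hv _ hpow
      simp only [pow_zero] at hpow
      exact absurd hpow (by linarith)
    | succ n ih =>
      intro u v hu hv hγuv hpow
      by_cases hcase : ∃ i : Fin m, a i ≤ u ∧ v ≤ a i + ρ i
      · -- zoom into piece i
        obtain ⟨i, hai, hbi⟩ := hcase
        have hρi := hρ0 i
        have hρi1 := hρ1 i
        have hdiff : (v - a i) / ρ i - (u - a i) / ρ i = (v - u) / ρ i := by
          rw [div_sub_div_same]; ring_nf
        have hbig : v - u < (v - u) / ρ i := by
          rw [lt_div_iff₀ hρi]; nlinarith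
        have hpow2 : R ^ n < (v - u) / ρ i := by
          rw [lt_div_iff₀ hρi]
          calc R ^ n * ρ i ≤ R ^ n * R := by
                have := pow_nonneg hR0.le n
                nlinarith [hρR i]
            _ = R ^ (n + 1) := by ring
            _ < v - u := hpow
        obtain ⟨x, hxK, hx1, hx2⟩ := ih ((u - a i) / ρ i) ((v - a i) / ρ i)
          (div_nonneg (by linarith) hρi.le)
          (by rw [div_le_one hρi]; linarith)
          (by rw [hdiff]; linarith)
          (by rw [hdiff]; linarith)
        refine ⟨φ i x, hsub i ⟨x, hxK, rfl⟩, ?_, ?_⟩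
        · rw [hφ']
          have := (div_lt_iff₀ hρi).mp hx1
          nlinarith
        · rw [hφ']
          have := (lt_div_iff₀ hρi).mp hx2
          nlinarith
      · -- a partition point lies in (u, v)
        set T := Finset.univ.filter (fun i : Fin m => a i ≤ u) with hT
        have hTne : T.Nonempty := ⟨⟨0, by omega⟩, by
          simp only [hT, Finset.mem_filter, Finset.mem_univ, true_and, ha0]
          exact hu⟩
        set i := T.max' hTne with hi
        have hai : a i ≤ u := by
          have h1 := T.max'_mem hTne
          simp only [hT, Finset.mem_filter, Finset.mem_univ, true_and] at h1
          exact h1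
        have hbv : a i + ρ i < v := by
          by_contra hle
          push_neg at hle
          exact hcase ⟨i, hai, hle⟩
        by_cases hub : u < a i + ρ i
        · exact ⟨a i + ρ i, hbK i, hub, hbv⟩
        · push_neg at hub
          have hine : i.val + 1 < m := by
            by_contra hh
            have hlt := i.isLt
            have hieq : i = ⟨m - 1, by omega⟩ := Fin.ext (show i.val = m - 1 by omega)
            rw [hieq, hblast] at hub
            linarith
          have hja : a ⟨i.val + 1, hine⟩ = a i + ρ i + γ := hasucc i hine
          have hju : u < a ⟨i.val + 1, hine⟩ := by
            by_contra hh
            push_neg at hh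
            have hjT : (⟨i.val + 1, hine⟩ : Fin m) ∈ T := by
              simp only [hT, Finset.mem_filter, Finset.mem_univ, true_and]
              exact hh
            have h2 := T.le_max' _ hjT
            exact absurd (show i.val + 1 ≤ i.val from h2) (by omega)
          have hjv : a ⟨i.val + 1, hine⟩ < v := by rw [hja]; linarith
          exact ⟨a ⟨i.val + 1, hine⟩, haK _, hju, hjv⟩
  have hgap : ∀ u v : ℝ, 0 ≤ u → v ≤ 1 → γ < v - u → ∃ x ∈ K, u < x ∧ x < v := by
    intro u v hu hv hγuv
    obtain ⟨n, hn⟩ := exists_pow_lt_of_lt_one (by linarith : (0:ℝ) < v - u)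
      (by linarith [hρR ⟨0, by omega⟩, hρ0 ⟨0, by omega⟩] : R < 1)
    exact hgapfull n u v hu hv hγuv hn
  -- Main lemma
  have hmain : ∀ n : ℕ, ∀ r' t' : ℝ, 0 < r' → R ^ n < r' →
      (∀ x ∈ K, r' * x + t' ∈ K) →
      ∃ w : List (Fin m), ∀ x : ℝ, r' * x + t' = compWord φ w x := by
    intro n
    induction n with
    | zero =>
      intro r' t' hr' hpow hft
      have ht0 : t' ∈ K := by have h := hft 0 h0K; simpa using h
      have ht1 : r' + t' ∈ K := by have h := hft 1 h1K; simpa using h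
      have h1 := (hK01 ht0).1
      have h2 := (hK01 ht1).2
      simp only [pow_zero] at hpow
      exact absurd hpow (by linarith)
    | succ n ih =>
      intro r' t' hr' hpow hft
      have ht0 : t' ∈ K := by have h := hft 0 h0K; simpa using h
      have ht1 : r' + t' ∈ K := by have h := hft 1 h1K; simpa using h
      have ht0' := hK01 ht0
      have ht1' := hK01 ht1
      have hrle1 : r' ≤ 1 := by linarith [ht0'.1, ht1'.2]
      rcases eq_or_lt_of_le hrle1 with heq | hlt
      · -- r' = 1 forces the identity
        have ht'0 : t' = 0 := by
          have := ht1'.2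
          have := ht0'.1
          linarith [heq.ge]
        refine ⟨[], fun x => ?_⟩
        rw [heq, ht'0]
        simp [compWord]
      · -- r' < 1 : the image fits inside one piece
        obtain ⟨i, y, hy, hty⟩ := hcases t' ht0
        have htlo : a i ≤ t' := by rw [hty]; exact (hpiece i y hy).1
        have hthi : t' ≤ a i + ρ i := by rw [hty]; exact (hpiece i y hy).2
        have hrt : r' + t' ≤ a i + ρ i := by
          by_contra hgt
          push_neg at hgt
          have hine : i.val + 1 < m := by
            by_contra hh
            have hlti := i.isLt
            have hieq : i = ⟨m - 1, by omega⟩ := Fin.ext (show i.val = m - 1 by omega)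
            rw [hieq, hblast] at hgt
            linarith [ht1'.2]
          have hge : a i + ρ i + γ ≤ r' + t' := by
            by_contra hh
            push_neg at hh
            exact hgapA i _ ht1 ⟨hgt, hh⟩
          obtain ⟨x, hxK, hx1, hx2⟩ := hgap ((a i + ρ i - t') / r')
            ((a i + ρ i + γ - t') / r')
            (div_nonneg (by linarith) hr'.le)
            (by rw [div_le_one hr']; linarith)
            (by
              rw [div_sub_div_same,
                show a i + ρ i + γ - t' - (a i + ρ i - t') = γ from by ring,
                lt_div_iff₀ hr']
              nlinarith [hγ])
          have hfx : r' * x + t' ∈ K := hft x hxK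
          have hd1 := (div_lt_iff₀ hr').mp hx1
          have hd2 := (lt_div_iff₀ hr').mp hx2
          exact hgapA i _ hfx ⟨by nlinarith, by nlinarith⟩
        have himg : ∀ x ∈ K, ∃ z ∈ K, r' * x + t' = φ i z := by
          intro x hx
          obtain ⟨hx0, hx1⟩ := hK01 hx
          have hmem : r' * x + t' ∈ K := hft x hx
          obtain ⟨j, z, hz, hjz⟩ := hcases _ hmem
          obtain ⟨hz1, hz2⟩ := hpiece j z hz
          rw [← hjz] at hz1 hz2
          have hrange1 : a i ≤ r' * x + t' := by nlinarith
          have hrange2 : r' * x + t' ≤ a i + ρ i := by nlinarith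
          have hij : j = i := by
            rcases lt_trichotomy j i with h | h | h
            · exfalso
              have := hmono j i h
              linarith [hγ]
            · exact h
            · exfalso
              have := hmono i j h
              linarith [hγ, (hρ0 j).le]
          rw [hij] at hjz
          exact ⟨z, hz, hjz⟩
        have hρi := hρ0 i
        have hft2 : ∀ x ∈ K, (r' / ρ i) * x + (t' - a i) / ρ i ∈ K := by
          intro x hx
          obtain ⟨z, hz, hez⟩ := himg x hx
          rw [hφ'] at hez
          have hzz : (r' / ρ i) * x + (t' - a i) / ρ i = z := by
            field_simp
            linear_combination hez
          rwa [hzz]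
        have hr2pos : 0 < r' / ρ i := div_pos hr' hρi
        have hpow2 : R ^ n < r' / ρ i := by
          rw [lt_div_iff₀ hρi]
          calc R ^ n * ρ i ≤ R ^ n * R := by
                have := pow_nonneg hR0.le n
                nlinarith [hρR i]
            _ = R ^ (n + 1) := by ring
            _ < r' := hpow
        obtain ⟨w, hw⟩ := ih (r' / ρ i) ((t' - a i) / ρ i) hr2pos hpow2 hft2
        refine ⟨i :: w, fun x => ?_⟩
        have hcons : compWord φ (i :: w) x = φ i (compWord φ w x) := rfl
        rw [hcons, hφ', ← hw x]
        field_simp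
        ring
  -- assemble
  have hRlt1 : R < 1 := hsum
  rcases lt_or_gt_of_ne (fun h : r = 0 => by simp [h] at hr0) with hneg | hpos
  · -- r < 0
    have hr0' : 0 < -r := by linarith
    obtain ⟨n, hn⟩ := exists_pow_lt_of_lt_one hr0' hRlt1
    have hft : ∀ x ∈ K, (-r) * x + (r + t) ∈ K := by
      intro x hx
      have h1x : (1 - x) ∈ K := by
        rw [← hsym] at hx
        obtain ⟨y, hy, hyx⟩ := hx
        have : 1 - x = y := by simp at hyx; linarith
        rwa [this]
      have := hf ⟨1 - x, h1x, rfl⟩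
      simpa [mul_comm] using (by ring_nf; ring_nf at this; exact this : (-r) * x + (r + t) ∈ K)
    obtain ⟨w, hw⟩ := hmain n (-r) (r + t) hr0' hn hft
    refine ⟨w, Or.inr fun x => ?_⟩
    have := hw (1 - x)
    linarith [this]
  · -- r > 0
    obtain ⟨n, hn⟩ := exists_pow_lt_of_lt_one hpos hRlt1
    have hft : ∀ x ∈ K, r * x + t ∈ K := fun x hx => hf ⟨x, hx, rfl⟩
    obtain ⟨w, hw⟩ := hmain n r t hpos hn hft
    exact ⟨w, Or.inl hw⟩
end

section
/- Let m ≥ 2 and 0 < β < 1/m, and let Γ be the attractor of {φᵢ(x) = βx + (i−1)(1−β)/(m−1) : 1 ≤ i ≤ m}. If f is a contractive similitude on ℝ with f(Γ) ⊆ Γ, then either f = φ_{i₁}∘⋯∘φ_{i_n} or f(x) = φ_{i₁}∘⋯∘φ_{i_n}(1−x) for some finite word over {1,…,m}. -/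
set_option maxHeartbeats 1000000

theorem homogeneous_embedding (m : ℕ) (hm : 2 ≤ m) (β : ℝ)
    (hβ0 : 0 < β) (hβm : β < 1 / m)
    (Γ : Set ℝ) (hΓc : IsCompact Γ) (hΓne : Γ.Nonempty)
    (φ : Fin m → ℝ → ℝ)
    (hφ : ∀ i x, φ i x = β * x + (i : ℕ) * (1 - β) / (m - 1))
    (hΓ : Γ = ⋃ i, φ i '' Γ)
    (r t : ℝ) (hr0 : 0 < |r|) (hr1 : |r| < 1)
    (hf : (fun x : ℝ => r * x + t) '' Γ ⊆ Γ) :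
    ∃ w : List (Fin m),
      (∀ x : ℝ, r * x + t = compWord φ w x) ∨
      (∀ x : ℝ, r * x + t = compWord φ w (1 - x)) := by
  have hm2 : (2:ℝ) ≤ (m:ℝ) := by exact_mod_cast hm
  have hmpos : (0:ℝ) < (m:ℝ) - 1 := by linarith
  have hβm' : β * m < 1 := by
    have := (lt_div_iff₀ (by linarith : (0:ℝ) < (m:ℝ))).mp hβm
    linarith
  have hβ1 : β < 1 := by nlinarith
  set c : ℝ := (1 - β) / ((m:ℝ) - 1) with hc_def
  have hc_pos : 0 < c := div_pos (by linarith) hmpos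
  have hφ' : ∀ (i : Fin m) (x : ℝ), φ i x = β * x + ((i:ℕ):ℝ) * c := by
    intro i x; rw [hφ, mul_div_assoc]
  have hmc : ((m:ℝ) - 1) * c = 1 - β := mul_div_cancel₀ _ hmpos.ne'
  have hβc : β < c := by
    rw [hc_def, lt_div_iff₀ hmpos]; nlinarith
  set g : ℝ := c - β with hg_def
  have hg : 0 < g := by simp [hg_def]; linarith
  -- basic membership
  have hsub : ∀ (i : Fin m), ∀ x ∈ Γ, φ i x ∈ Γ := by
    intro i x hx
    rw [hΓ]
    exact Set.mem_iUnion.mpr ⟨i, ⟨x, hx, rfl⟩⟩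
  have hcover : ∀ z ∈ Γ, ∃ i : Fin m, ∃ y ∈ Γ, z = β * y + ((i:ℕ):ℝ) * c := by
    intro z hz
    rw [hΓ] at hz
    obtain ⟨i, y, hy, hyz⟩ := Set.mem_iUnion.mp hz
    exact ⟨i, y, hy, by rw [← hyz, hφ']⟩
  have hdle : ∀ i : Fin m, ((i:ℕ):ℝ) * c ≤ 1 - β := by
    intro i
    have h1 : ((i:ℕ):ℝ) ≤ (m:ℝ) - 1 := by
      have := i.isLt
      have : ((i:ℕ):ℝ) ≤ (m:ℝ) - 1 := by
        have h2 : (i:ℕ) + 1 ≤ m := i.isLt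
        have : ((i:ℕ):ℝ) + 1 ≤ (m:ℝ) := by exact_mod_cast h2
        linarith
      exact this
    calc ((i:ℕ):ℝ) * c ≤ ((m:ℝ) - 1) * c := by nlinarith
    _ = 1 - β := hmc
  -- bounds for Γ
  obtain ⟨M, hMΓ, hMub⟩ := hΓc.exists_isGreatest hΓne
  obtain ⟨a, haΓ, halb⟩ := hΓc.exists_isLeast hΓne
  have hM1 : M ≤ 1 := by
    obtain ⟨i, y, hy, hyM⟩ := hcover M hMΓ
    have h1 := hMub hy
    have h2 := hdle i
    nlinarith
  have ha0 : 0 ≤ a := by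
    obtain ⟨i, y, hy, hya⟩ := hcover a haΓ
    have h1 := halb hy
    have h2 : (0:ℝ) ≤ ((i:ℕ):ℝ) * c := by positivity
    nlinarith
  have h0Γ : (0:ℝ) ∈ Γ := by
    have hmem := hsub ⟨0, by omega⟩ a haΓ
    rw [hφ'] at hmem
    simp only [Fin.val_mk, Nat.cast_zero, zero_mul, add_zero] at hmem
    have h1 := halb hmem
    have : a = 0 := by nlinarith
    rwa [this] at haΓ
  have h1Γ : (1:ℝ) ∈ Γ := by
    have hmem := hsub ⟨m - 1, by omega⟩ M hMΓ
    rw [hφ'] at hmem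
    have hcast : (((m - 1 : ℕ)):ℝ) = (m:ℝ) - 1 := by
      push_cast [Nat.cast_sub (by omega : 1 ≤ m)]; ring
    rw [Fin.val_mk, hcast, hmc] at hmem
    have h1 := hMub hmem
    have : M = 1 := by nlinarith
    rwa [this] at hMΓ
  have hlb : ∀ x ∈ Γ, 0 ≤ x := fun x hx => ha0.trans (halb hx)
  have hub : ∀ x ∈ Γ, x ≤ 1 := fun x hx => (hMub hx).trans hM1
  -- each point of Γ lies in a level-1 interval
  have hIcc : ∀ z ∈ Γ, ∃ i : Fin m,
      ((i:ℕ):ℝ) * c ≤ z ∧ z ≤ ((i:ℕ):ℝ) * c + β := by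
    intro z hz
    obtain ⟨i, y, hy, hyz⟩ := hcover z hz
    have h1 : 0 ≤ β * y := mul_nonneg hβ0.le (hlb y hy)
    have h2 : β * y ≤ β * 1 := mul_le_mul_of_nonneg_left (hub y hy) hβ0.le
    exact ⟨i, by linarith, by linarith⟩
  -- the gaps contain no points of Γ
  have hgapempty : ∀ (i : ℕ), ∀ z ∈ Γ,
      ¬((i:ℝ) * c + β < z ∧ z < (i:ℝ) * c + c) := by
    rintro i z hz ⟨h1, h2⟩
    obtain ⟨j, hj1, hj2⟩ := hIcc z hz
    rcases le_or_gt ((j:ℕ)) i with h | h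
    · have hcast : (((j:ℕ)):ℝ) ≤ (i:ℝ) := by exact_mod_cast h
      nlinarith
    · have hcast : (i:ℝ) + 1 ≤ (((j:ℕ)):ℝ) := by exact_mod_cast h
      nlinarith
  -- density: every subinterval of [0,1] of length ≥ g meets Γ
  have hdenseN : ∀ n : ℕ, ∀ a b : ℝ, 0 ≤ a → b ≤ 1 → a + g ≤ b → β ^ n ≤ b - a →
      ∃ z ∈ Γ, a ≤ z ∧ z ≤ b := by
    intro n
    induction n with
    | zero =>
      intro a b ha hb hab hpow
      simp only [pow_zero] at hpow
      exact ⟨0, h0Γ, by linarith, by linarith⟩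
    | succ n ih =>
      intro a b ha hb hab hpow
      by_cases hE : ∃ j : Fin m,
          (a ≤ ((j:ℕ):ℝ) * c ∧ ((j:ℕ):ℝ) * c ≤ b) ∨
          (a ≤ ((j:ℕ):ℝ) * c + β ∧ ((j:ℕ):ℝ) * c + β ≤ b)
      · obtain ⟨j, hj⟩ := hE
        rcases hj with ⟨h1, h2⟩ | ⟨h1, h2⟩
        · have hmem := hsub j 0 h0Γ
          rw [hφ'] at hmem
          rw [mul_zero, zero_add] at hmem
          exact ⟨_, hmem, h1, h2⟩
        · have hmem := hsub j 1 h1Γ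
          rw [hφ'] at hmem
          rw [mul_one, add_comm] at hmem
          exact ⟨_, hmem, h1, h2⟩
      · set i : ℕ := min (⌊a / c⌋₊) (m - 1) with hi_def
        have him : i ≤ m - 1 := min_le_right _ _
        have hilt : i < m := by omega
        have hfloor : ((⌊a / c⌋₊ : ℕ):ℝ) ≤ a / c := Nat.floor_le (div_nonneg ha hc_pos.le)
        have hic : (i:ℝ) * c ≤ a := by
          have h1 : (i:ℝ) ≤ ((⌊a / c⌋₊ : ℕ):ℝ) := by
            exact_mod_cast min_le_left (⌊a / c⌋₊) (m - 1)
          have h2 : (i:ℝ) ≤ a / c := h1.trans hfloor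
          calc (i:ℝ) * c ≤ (a / c) * c := by nlinarith
          _ = a := div_mul_cancel₀ _ hc_pos.ne'
        have hbi : b ≤ (i:ℝ) * c + β := by
          by_contra hb'
          push_neg at hb'
          have h2 : (i:ℝ) * c + β < a := by
            by_contra h3
            push_neg at h3
            exact hE ⟨⟨i, hilt⟩, Or.inr ⟨by simpa using h3, by simpa using hb'.le⟩⟩
          rcases eq_or_lt_of_le him with he | hlt2
          · -- i = m - 1 : then i*c + β = 1 < a, impossible
            have hcast : ((i:ℕ):ℝ) = (m:ℝ) - 1 := by
              rw [he]
              push_cast [Nat.cast_sub (by omega : 1 ≤ m)]; ring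
            rw [hcast, hmc] at h2
            linarith
          · -- i < m - 1 : then i = ⌊a/c⌋ and (i+1)*c ∈ [a,b]
            have hieq : i = ⌊a / c⌋₊ := by omega
            have hlt3 : a < ((i:ℝ) + 1) * c := by
              have := Nat.lt_floor_add_one (a / c)
              have h4 : a / c < (i:ℝ) + 1 := by rw [hieq]; exact_mod_cast this
              calc a = (a / c) * c := (div_mul_cancel₀ _ hc_pos.ne').symm
              _ < ((i:ℝ) + 1) * c := by nlinarith
            have hle4 : ((i:ℝ) + 1) * c ≤ b := by nlinarith
            have hi1 : i + 1 < m := by omega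
            refine hE ⟨⟨i + 1, hi1⟩, Or.inl ⟨?_, ?_⟩⟩
            · simpa [Nat.cast_add, Nat.cast_one] using hlt3.le
            · simpa [Nat.cast_add, Nat.cast_one] using hle4
        -- recurse into the cell
        set a' : ℝ := (a - (i:ℝ) * c) / β with ha'_def
        set b' : ℝ := (b - (i:ℝ) * c) / β with hb'_def
        have ha'0 : 0 ≤ a' := div_nonneg (by linarith) hβ0.le
        have hb'1 : b' ≤ 1 := by rw [hb'_def, div_le_one hβ0]; linarith
        have hdiff : b' - a' = (b - a) / β := by rw [ha'_def, hb'_def]; ring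
        have hab' : a' + g ≤ b' := by
          have h5 : g * β ≤ g * 1 := by nlinarith
          have h6 : g ≤ (b - a) / β := by
            rw [le_div_iff₀ hβ0]; linarith
          linarith [hdiff, h6]
        have hpow' : β ^ n ≤ b' - a' := by
          rw [hdiff, le_div_iff₀ hβ0]
          calc β ^ n * β = β ^ (n + 1) := (pow_succ β n).symm
          _ ≤ b - a := hpow
        obtain ⟨z', hz'Γ, hz'1, hz'2⟩ := ih a' b' ha'0 hb'1 hab' hpow'
        have hmem := hsub ⟨i, hilt⟩ z' hz'Γ
        rw [hφ'] at hmem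
        have hval : (((⟨i, hilt⟩ : Fin m) : ℕ):ℝ) = (i:ℝ) := by simp
        rw [hval] at hmem
        refine ⟨β * z' + (i:ℝ) * c, hmem, ?_, ?_⟩
        · have : a - (i:ℝ) * c ≤ z' * β := (div_le_iff₀ hβ0).mp hz'1
          linarith
        · have : b' * β = b - (i:ℝ) * c := by
            rw [hb'_def]; field_simp
          nlinarith [mul_le_mul_of_nonneg_right hz'2 hβ0.le]
  have hdense : ∀ a b : ℝ, 0 ≤ a → b ≤ 1 → a + g ≤ b → ∃ z ∈ Γ, a ≤ z ∧ z ≤ b := by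
    obtain ⟨n, hn⟩ := exists_pow_lt_of_lt_one hg hβ1
    intro a b h1 h2 h3
    exact hdenseN n a b h1 h2 h3 (by linarith)
  -- contraction ratio of any self-embedding is ≤ 1
  have hle1 : ∀ r' t' : ℝ, (∀ x ∈ Γ, r' * x + t' ∈ Γ) → |r'| ≤ 1 := by
    intro r' t' h
    have h0 := h 0 h0Γ
    have h1 := h 1 h1Γ
    rw [mul_zero, zero_add] at h0
    rw [mul_one] at h1
    have b1 := hlb _ h0; have b2 := hub _ h0
    have b3 := hlb _ h1; have b4 := hub _ h1
    rw [abs_le]; constructor <;> linarith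
  -- key: a self-embedding hitting two different level-1 cells has |r'| ≥ 1
  have hkey : ∀ (r' t' : ℝ), 0 < |r'| → (∀ x ∈ Γ, r' * x + t' ∈ Γ) →
      ∀ (x y : ℝ), x ∈ Γ → y ∈ Γ → ∀ (i j : ℕ), i + 1 ≤ j →
      r' * x + t' ≤ (i:ℝ) * c + β → (j:ℝ) * c ≤ r' * y + t' → 1 ≤ |r'| := by
    intro r' t' hr' hmap x y hx hy i j hij hfx hfy
    by_contra hlt
    push_neg at hlt
    have hr'ne : r' ≠ 0 := fun h => by simp [h] at hr'
    set p : ℝ := (i:ℝ) * c + β with hp_def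
    have hgapj : p + g ≤ (j:ℝ) * c := by
      have hcast : (i:ℝ) + 1 ≤ (j:ℝ) := by exact_mod_cast hij
      have : ((i:ℝ) + 1) * c ≤ (j:ℝ) * c := by nlinarith
      rw [hp_def, hg_def]; nlinarith
    have hfy' : p + g ≤ r' * y + t' := le_trans hgapj hfy
    rcases hr'ne.lt_or_gt with hneg | hpos
    · -- r' < 0
      set lo : ℝ := (p + g - t') / r' with hlo_def
      set hi : ℝ := (p - t') / r' with hhi_def
      have hrlo : r' * lo = p + g - t' := by
        rw [hlo_def]; field_simp
      have hrhi : r' * hi = p - t' := by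
        rw [hhi_def]; field_simp
      have hlt' : -r' < 1 := by rw [← abs_of_neg hneg]; exact hlt
      have hylo : y ≤ lo := by
        by_contra h
        push_neg at h
        have := mul_lt_mul_of_neg_left h hneg
        linarith
      have hhix : hi ≤ x := by
        by_contra h
        push_neg at h
        have := mul_lt_mul_of_neg_left h hneg
        linarith
      have hglt : g < hi - lo := by
        have h1 : r' * (hi - lo) = -g := by rw [mul_sub, hrlo, hrhi]; ring
        nlinarith
      set A : ℝ := (lo + hi - g) / 2 with hA_def
      set B : ℝ := (lo + hi + g) / 2 with hB_def
      have hloA : lo < A := by rw [hA_def]; linarith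
      have hBhi : B < hi := by rw [hB_def]; linarith
      have hA0 : 0 ≤ A := le_trans (hlb y hy) (le_trans hylo hloA.le)
      have hB1 : B ≤ 1 := le_trans (le_trans hBhi.le hhix) (hub x hx)
      have hAB : A + g ≤ B := by rw [hA_def, hB_def]; linarith
      obtain ⟨z, hzΓ, hz1, hz2⟩ := hdense A B hA0 hB1 hAB
      have hzlo : lo < z := lt_of_lt_of_le hloA hz1
      have hzhi : z < hi := lt_of_le_of_lt hz2 hBhi
      have hm1 := mul_lt_mul_of_neg_left hzhi hneg
      have hm2 := mul_lt_mul_of_neg_left hzlo hneg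
      refine hgapempty i (r' * z + t') (hmap z hzΓ) ⟨?_, ?_⟩
      · rw [← hp_def]; linarith
      · have hpg : (i:ℝ) * c + c = p + g := by rw [hp_def, hg_def]; ring
        rw [hpg]; linarith
    · -- r' > 0
      set lo : ℝ := (p - t') / r' with hlo_def
      set hi : ℝ := (p + g - t') / r' with hhi_def
      have hrlo : r' * lo = p - t' := by
        rw [hlo_def]; field_simp
      have hrhi : r' * hi = p + g - t' := by
        rw [hhi_def]; field_simp
      have hlt' : r' < 1 := by rw [← abs_of_pos hpos]; exact hlt
      have hxlo : x ≤ lo := by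
        by_contra h
        push_neg at h
        have := mul_lt_mul_of_pos_left h hpos
        linarith
      have hhiy : hi ≤ y := by
        by_contra h
        push_neg at h
        have := mul_lt_mul_of_pos_left h hpos
        linarith
      have hglt : g < hi - lo := by
        have h1 : r' * (hi - lo) = g := by rw [mul_sub, hrlo, hrhi]; ring
        nlinarith
      set A : ℝ := (lo + hi - g) / 2 with hA_def
      set B : ℝ := (lo + hi + g) / 2 with hB_def
      have hloA : lo < A := by rw [hA_def]; linarith
      have hBhi : B < hi := by rw [hB_def]; linarith
      have hA0 : 0 ≤ A := le_trans (hlb x hx) (le_trans hxlo hloA.le)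
      have hB1 : B ≤ 1 := le_trans (le_trans hBhi.le hhiy) (hub y hy)
      have hAB : A + g ≤ B := by rw [hA_def, hB_def]; linarith
      obtain ⟨z, hzΓ, hz1, hz2⟩ := hdense A B hA0 hB1 hAB
      have hzlo : lo < z := lt_of_lt_of_le hloA hz1
      have hzhi : z < hi := lt_of_le_of_lt hz2 hBhi
      have hm1 := mul_lt_mul_of_pos_left hzlo hpos
      have hm2 := mul_lt_mul_of_pos_left hzhi hpos
      refine hgapempty i (r' * z + t') (hmap z hzΓ) ⟨?_, ?_⟩
      · rw [← hp_def]; linarith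
      · have hpg : (i:ℝ) * c + c = p + g := by rw [hp_def, hg_def]; ring
        rw [hpg]; linarith
  have hcaseB : ∀ (r' t' : ℝ), 0 < |r'| → (∀ x ∈ Γ, r' * x + t' ∈ Γ) →
      (¬ ∃ i : Fin m, ∀ x ∈ Γ, r' * x + t' ∈ φ i '' Γ) →
      ∃ w : List (Fin m), (∀ x : ℝ, r' * x + t' = compWord φ w x) ∨
        (∀ x : ℝ, r' * x + t' = compWord φ w (1 - x)) := by
    intro r' t' hr' hmap hA
    push_neg at hA
    have hmemU : ∀ z ∈ Γ, ∃ i : Fin m, z ∈ φ i '' Γ := by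
      intro z hz; rw [hΓ] at hz; exact Set.mem_iUnion.mp hz
    have hIccIm : ∀ (i : Fin m) (z : ℝ), z ∈ φ i '' Γ →
        ((i:ℕ):ℝ) * c ≤ z ∧ z ≤ ((i:ℕ):ℝ) * c + β := by
      rintro i z ⟨y, hy, rfl⟩
      rw [hφ']
      have h1 : 0 ≤ β * y := mul_nonneg hβ0.le (hlb y hy)
      have h2 : β * y ≤ β * 1 := mul_le_mul_of_nonneg_left (hub y hy) hβ0.le
      constructor <;> linarith
    obtain ⟨i₀, hi₀⟩ := hmemU _ (hmap 0 h0Γ)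
    obtain ⟨x₁, hx₁Γ, hx₁⟩ := hA i₀
    obtain ⟨i₁, hi₁⟩ := hmemU _ (hmap x₁ hx₁Γ)
    have hne : (i₁ : ℕ) ≠ (i₀ : ℕ) := fun h => hx₁ (by rwa [show i₁ = i₀ from Fin.ext h] at hi₁)
    obtain ⟨hb₀1, hb₀2⟩ := hIccIm _ _ hi₀
    obtain ⟨hb₁1, hb₁2⟩ := hIccIm _ _ hi₁
    have h1le : 1 ≤ |r'| := by
      rcases lt_or_gt_of_ne hne with h | h
      · exact hkey r' t' hr' hmap x₁ 0 hx₁Γ h0Γ (i₁:ℕ) (i₀:ℕ) (by omega) hb₁2 hb₀1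
      · exact hkey r' t' hr' hmap 0 x₁ h0Γ hx₁Γ (i₀:ℕ) (i₁:ℕ) (by omega) hb₀2 hb₁1
    have habs : |r'| = 1 := le_antisymm (hle1 r' t' hmap) h1le
    have h0m := hmap 0 h0Γ
    have h1m := hmap 1 h1Γ
    rw [mul_zero, zero_add] at h0m
    rw [mul_one] at h1m
    have c1 := hlb _ h0m; have c2 := hub _ h0m
    have c3 := hlb _ h1m; have c4 := hub _ h1m
    rcases (abs_eq (by norm_num : (0:ℝ) ≤ 1)).mp habs with hr1' | hr1'
    · refine ⟨[], Or.inl fun x => ?_⟩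
      have hid : compWord φ [] x = x := rfl
      rw [hid, hr1']
      have ht0 : t' = 0 := by linarith
      rw [ht0]; ring
    · refine ⟨[], Or.inr fun x => ?_⟩
      have hid : compWord φ [] (1 - x) = 1 - x := rfl
      rw [hid, hr1']
      have ht1 : t' = 1 := by linarith
      rw [ht1]; ring
  -- step: if the image is inside one cell, pull back
  have hstepA : ∀ (r' t' : ℝ) (i : Fin m), (∀ x ∈ Γ, r' * x + t' ∈ φ i '' Γ) →
      ∀ x ∈ Γ, (r' / β) * x + (t' - ((i:ℕ):ℝ) * c) / β ∈ Γ := by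
    intro r' t' i h x hx
    obtain ⟨y, hy, hyx⟩ := h x hx
    rw [hφ'] at hyx
    have : (r' / β) * x + (t' - ((i:ℕ):ℝ) * c) / β = y := by
      field_simp
      linarith
    rwa [this]
  -- main induction
  have hmain : ∀ k : ℕ, ∀ r' t' : ℝ, 0 < |r'| → β ^ k ≤ |r'| →
      (∀ x ∈ Γ, r' * x + t' ∈ Γ) →
      ∃ w : List (Fin m), (∀ x : ℝ, r' * x + t' = compWord φ w x) ∨
        (∀ x : ℝ, r' * x + t' = compWord φ w (1 - x)) := by
    intro k
    induction k with
    | zero =>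
      intro r' t' h0' h1' hmaps
      by_cases hA : ∃ i : Fin m, ∀ x ∈ Γ, r' * x + t' ∈ φ i '' Γ
      · exfalso
        obtain ⟨i, hi⟩ := hA
        have h2 := hle1 _ _ (hstepA r' t' i hi)
        rw [pow_zero] at h1'
        rw [abs_div, abs_of_pos hβ0, div_le_one hβ0] at h2
        linarith
      · exact hcaseB r' t' h0' hmaps hA
    | succ k ih =>
      intro r' t' h0' h1' hmaps
      by_cases hA : ∃ i : Fin m, ∀ x ∈ Γ, r' * x + t' ∈ φ i '' Γ
      · obtain ⟨i, hi⟩ := hA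
        have hr'' : 0 < |r' / β| := by
          rw [abs_div, abs_of_pos hβ0]
          exact div_pos h0' hβ0
        have hk' : β ^ k ≤ |r' / β| := by
          rw [abs_div, abs_of_pos hβ0, le_div_iff₀ hβ0, ← pow_succ]
          exact h1'
        obtain ⟨w, hw⟩ := ih (r' / β) ((t' - ((i:ℕ):ℝ) * c) / β) hr'' hk' (hstepA r' t' i hi)
        refine ⟨i :: w, ?_⟩
        have hcons : ∀ x : ℝ, compWord φ (i :: w) x = φ i (compWord φ w x) := fun _ => rfl
        rcases hw with hw | hw
        · left
          intro x
          rw [hcons, hφ', ← hw x]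
          field_simp
          ring
        · right
          intro x
          rw [hcons, hφ', ← hw x]
          field_simp
          ring
      · exact hcaseB r' t' h0' hmaps hA
  obtain ⟨k, hk⟩ := exists_pow_lt_of_lt_one hr0 hβ1
  exact hmain k r t hr0 hk.le (fun x hx => hf ⟨x, hx, rfl⟩)
end

section
/- Let 0 < ρ < 1/3, ρ ≤ λ < (1−ρ)/2, E the attractor of {ρx, ρx+λ, ρx+1−ρ}, with φ₁(x)=ρx, φ₂(x)=ρx+λ, φ₃(x)=ρx+1−ρ. If f(x) = rx+t with r ≠ 0 and f(φ₁(E) ∪ φ₂(E)) ⊆ E, then f(φ₁(E) ∪ φ₂(E)) ⊆ φ₁(E) ∪ φ₂(E) or f(φ₁(E) ∪ φ₂(E)) ⊆ φ₃(E). -/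
/-!
The attractor satisfies E ⊆ [0, 1] and 0, 1 ∈ E, so φ₁(E) ∪ φ₂(E) ⊆ [0, λ + ρ] and
φ₃(E) ⊆ [1 - ρ, 1] are separated by the gap (λ + ρ, 1 - ρ) of length g = 1 - 2ρ - λ. Every gap of
E inside [0, 1] has length at most g: it is either one of the gaps (ρ, λ), (λ + ρ, 1 - ρ) between
the pieces, or a ρ-scaled gap inside a piece, so the supremum G of gap lengths satisfies
G ≤ max g (ρ G).

As f(0), f(λ + ρ) ∈ [0, 1], we get |r| (λ + ρ) ≤ 1. If f sent 0 and ρ (or λ and λ + ρ) to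
opposite sides of the big gap, then x ↦ f(ρ x) (or x ↦ f(ρ x + λ)) would pull it back to a gap
of E of length g / (|r| ρ) > g. If f sent ρ and λ to opposite sides, the piece f([0, ρ]) or
f([λ, λ + ρ]) lying in [1 - ρ, 1] forces |r| ≤ 1, while |f(λ) - f(ρ)| ≥ g > λ - ρ forces
|r| > 1. So f(0) and f(λ + ρ), and with them all of f([0, λ + ρ]), lie on one side of the big gap.
-/

open Set

def GapBound (E : Set ℝ) (G : ℝ) : Prop :=
  ∀ u v : ℝ, 0 ≤ u → v ≤ 1 → Disjoint E (Ioo u v) → v - u ≤ G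

namespace GapBound

variable {E : Set ℝ} {G G' : ℝ}

lemma mono (hE : GapBound E G) (hG : G ≤ G') : GapBound E G' :=
  fun u v hu hv huv => (hE u v hu hv huv).trans hG

/-- The preimage of `(α, β)` under `x ↦ s * x + c` is a gap of `E` of length `(β - α) / s`. -/
lemma sub_le_mul {α β s c : ℝ} (hE : GapBound E G) (hαβ : α < β)
    (hψ : ∀ x ∈ E, s * x + c ∉ Ioo α β) (h0 : c ≤ α) (h1 : β ≤ s + c) :
    β - α ≤ s * G := by
  have hs : 0 < s := by linarith
  have hgap := hE ((α - c) / s) ((β - c) / s) (div_nonneg (by linarith) hs.le)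
    (by rw [div_le_one hs]; linarith) (by
      rw [Set.disjoint_left]
      rintro x hx ⟨hαx, hxβ⟩
      rw [div_lt_iff₀' hs] at hαx
      rw [lt_div_iff₀' hs] at hxβ
      exact hψ x hx ⟨by linarith, by linarith⟩)
  rw [div_sub_div_same, div_le_iff₀' hs] at hgap
  linarith

lemma sub_le_abs_mul {α β s c : ℝ} (hE : GapBound E G) (hαβ : α < β)
    (hψ : ∀ x ∈ E, s * x + c ∉ Ioo α β) (h0 : 0 ∈ E) (h1 : 1 ∈ E)
    (hside : ¬(β ≤ c ↔ β ≤ s + c)) : β - α ≤ |s| * G := by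
  have hc : c ∉ Ioo α β := by simpa using hψ 0 h0
  have hsc : s + c ∉ Ioo α β := by simpa using hψ 1 h1
  simp only [mem_Ioo, not_and_or, not_lt] at hc hsc
  rcases hc with hc | hc <;> rcases hsc with hsc | hsc
  · exact absurd (iff_of_false (by linarith) (by linarith)) hside
  · rw [abs_of_pos (by linarith)]
    exact hE.sub_le_mul hαβ hψ hc hsc
  · rw [abs_of_neg (by linarith)]
    have hψ' : ∀ x ∈ E, -s * x + -c ∉ Ioo (-β) (-α) := fun x hx ⟨h, h'⟩ =>
      hψ x hx ⟨by linarith, by linarith⟩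
    linarith [hE.sub_le_mul (neg_lt_neg hαβ) hψ' (neg_le_neg hc) (by linarith)]
  · exact absurd (iff_of_true hc (by linarith)) hside

end GapBound

section Attractor

variable {ρ lam : ℝ} {E : Set ℝ}

lemma maps_mem_of_eq_union
    (hE : E = (fun x : ℝ => ρ * x) '' E ∪ (fun x : ℝ => ρ * x + lam) '' E ∪
        (fun x : ℝ => ρ * x + (1 - ρ)) '' E) {x : ℝ} (hx : x ∈ E) :
    ρ * x ∈ E ∧ ρ * x + lam ∈ E ∧ ρ * x + (1 - ρ) ∈ E := by
  rw [hE]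
  exact ⟨.inl (.inl ⟨x, hx, rfl⟩), .inl (.inr ⟨x, hx, rfl⟩), .inr ⟨x, hx, rfl⟩⟩

lemma isLeast_zero_of_eq_union (hEc : IsCompact E) (hEne : E.Nonempty)
    (hE : E = (fun x : ℝ => ρ * x) '' E ∪ (fun x : ℝ => ρ * x + lam) '' E ∪
        (fun x : ℝ => ρ * x + (1 - ρ)) '' E)
    (hρ0 : 0 ≤ ρ) (hρ1 : ρ < 1) (hlam : 0 ≤ lam) : IsLeast E 0 := by
  obtain ⟨m, hm⟩ : ∃ m, IsLeast E m := ⟨_, hEc.isLeast_sInf hEne⟩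
  have hle : m ≤ ρ * m := hm.2 (maps_mem_of_eq_union hE hm.1).1
  have hge : ρ * m ≤ m := by
    have hmE := hm.1
    rw [hE] at hmE
    rcases hmE with (⟨y, hy, rfl⟩ | ⟨y, hy, rfl⟩) | ⟨y, hy, rfl⟩ <;>
      nlinarith [hm.2 hy]
  obtain rfl : m = 0 := by nlinarith
  exact hm

lemma isGreatest_one_of_eq_union (hEc : IsCompact E) (hEne : E.Nonempty)
    (hE : E = (fun x : ℝ => ρ * x) '' E ∪ (fun x : ℝ => ρ * x + lam) '' E ∪
        (fun x : ℝ => ρ * x + (1 - ρ)) '' E)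
    (hρ0 : 0 ≤ ρ) (hρ1 : ρ < 1) (hlam : lam ≤ 1 - ρ) : IsGreatest E 1 := by
  obtain ⟨M, hM⟩ : ∃ M, IsGreatest E M := ⟨_, hEc.isGreatest_sSup hEne⟩
  have hge : ρ * M + (1 - ρ) ≤ M := hM.2 (maps_mem_of_eq_union hE hM.1).2.2
  have hle : M ≤ ρ * M + (1 - ρ) := by
    have hME := hM.1
    rw [hE] at hME
    rcases hME with (⟨y, hy, rfl⟩ | ⟨y, hy, rfl⟩) | ⟨y, hy, rfl⟩ <;>
      nlinarith [hM.2 hy]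
  obtain rfl : M = 1 := by nlinarith
  exact hM

end Attractor

section Gaps

variable {ρ lam G : ℝ} {E : Set ℝ}

lemma GapBound.max_of_maps_mem (hl1 : ρ ≤ lam) (hl2 : lam ≤ (1 - ρ) / 2)
    (hmaps : ∀ x ∈ E, ρ * x ∈ E ∧ ρ * x + lam ∈ E ∧ ρ * x + (1 - ρ) ∈ E)
    (h0 : 0 ∈ E) (h1 : 1 ∈ E) (hG : GapBound E G) :
    GapBound E (max (1 - 2 * ρ - lam) (ρ * G)) := by
  intro u v hu hv huv
  rcases le_or_gt v u with hvu | hlt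
  · exact le_max_of_le_left (by linarith)
  have hscaled : ∀ c, (∀ x ∈ E, ρ * x + c ∈ E) → c ≤ u → v ≤ ρ + c → v - u ≤ ρ * G :=
    fun c hc hcu hvc => hG.sub_le_mul hlt
      (fun x hx hx' => Set.disjoint_left.1 huv (hc x hx) hx') hcu hvc
  have hout : ∀ p ∈ E, p ≤ u ∨ v ≤ p := fun p hp => by
    by_contra! h
    exact Set.disjoint_left.1 huv hp h
  have hρ : ρ ∈ E := by simpa using (hmaps 1 h1).1
  have hlam : lam ∈ E := by simpa using (hmaps 0 h0).2.1
  have hlamρ : lam + ρ ∈ E := by simpa [add_comm] using (hmaps 1 h1).2.1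
  have h1ρ : 1 - ρ ∈ E := by simpa using (hmaps 0 h0).2.2
  rcases hout ρ hρ with hρu | hvρ
  swap
  · refine le_max_of_le_right (hscaled 0 (fun x hx => ?_) hu (by linarith))
    simpa using (hmaps x hx).1
  rcases hout lam hlam with hlamu | hvlam
  swap
  · exact le_max_of_le_left (by linarith)
  rcases hout (lam + ρ) hlamρ with hlamρu | hvlamρ
  swap
  · exact le_max_of_le_right (hscaled lam (fun x hx => (hmaps x hx).2.1) hlamu (by linarith))
  rcases hout (1 - ρ) h1ρ with h1ρu | hv1ρ
  · exact le_max_of_le_right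
      (hscaled (1 - ρ) (fun x hx => (hmaps x hx).2.2) h1ρu (by linarith))
  · exact le_max_of_le_left (by linarith)

lemma gapBound_of_maps_mem (hl1 : ρ ≤ lam) (hl2 : lam ≤ (1 - ρ) / 2)
    (hmaps : ∀ x ∈ E, ρ * x ∈ E ∧ ρ * x + lam ∈ E ∧ ρ * x + (1 - ρ) ∈ E)
    (h0 : 0 ∈ E) (h1 : 1 ∈ E) : GapBound E (1 - 2 * ρ - lam) := by
  set S := {d | ∃ u v, 0 ≤ u ∧ v ≤ 1 ∧ Disjoint E (Ioo u v) ∧ v - u = d}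
  have hS : BddAbove S := ⟨1, by rintro _ ⟨u, v, hu, hv, -, rfl⟩; linarith⟩
  have hS0 : 0 ∈ S := ⟨0, 0, le_rfl, zero_le_one, by simp, sub_self 0⟩
  have hsup : GapBound E (sSup S) := fun u v hu hv huv =>
    le_csSup hS ⟨u, v, hu, hv, huv, rfl⟩
  have hmax : sSup S ≤ max (1 - 2 * ρ - lam) (ρ * sSup S) := csSup_le ⟨0, hS0⟩ <| by
    rintro _ ⟨u, v, hu, hv, huv, rfl⟩
    exact hsup.max_of_maps_mem hl1 hl2 hmaps h0 h1 u v hu hv huv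
  refine hsup.mono ?_
  have hnonneg : 0 ≤ sSup S := le_csSup hS hS0
  rcases le_max_iff.1 hmax with h | h
  · exact h
  · nlinarith

end Gaps

lemma Set.OrdConnected.mul_add_mem_of_mem_Icc {s : Set ℝ} (hs : s.OrdConnected)
    {a b r t x : ℝ} (ha : r * a + t ∈ s) (hb : r * b + t ∈ s) (hx : x ∈ Icc a b) :
    r * x + t ∈ s := by
  refine hs.uIcc_subset ha hb (mem_uIcc.2 ?_)
  rcases le_total 0 r with hr | hr
  · exact .inl ⟨by nlinarith [hx.1], by nlinarith [hx.2]⟩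
  · exact .inr ⟨by nlinarith [hx.2], by nlinarith [hx.1]⟩

section Dichotomy

variable {ρ lam r t : ℝ} {E : Set ℝ}

lemma image_union_subset_Icc (h0 : IsLeast E 0) (h1 : IsGreatest E 1) (hρ : 0 ≤ ρ)
    (hlam : 0 ≤ lam) :
    (fun x : ℝ => ρ * x) '' E ∪ (fun x : ℝ => ρ * x + lam) '' E ⊆ Icc 0 (lam + ρ) := by
  rintro _ (⟨x, hx, rfl⟩ | ⟨x, hx, rfl⟩) <;>
    exact ⟨by nlinarith [h0.2 hx], by nlinarith [h1.2 hx]⟩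

lemma image_subset_Ici (h0 : IsLeast E 0) (hρ : 0 ≤ ρ) :
    (fun x : ℝ => ρ * x + (1 - ρ)) '' E ⊆ Ici (1 - ρ) := by
  rintro _ ⟨x, hx, rfl⟩
  exact le_add_of_nonneg_left (mul_nonneg hρ (h0.2 hx))

lemma mem_image_union_of_lt
    (hE : E = (fun x : ℝ => ρ * x) '' E ∪ (fun x : ℝ => ρ * x + lam) '' E ∪
        (fun x : ℝ => ρ * x + (1 - ρ)) '' E)
    (h3 : (fun x : ℝ => ρ * x + (1 - ρ)) '' E ⊆ Ici (1 - ρ)) {y : ℝ} (hy : y ∈ E)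
    (hy' : y < 1 - ρ) : y ∈ (fun x : ℝ => ρ * x) '' E ∪ (fun x : ℝ => ρ * x + lam) '' E := by
  rw [hE] at hy
  exact hy.resolve_right fun h => (h3 h).not_gt hy'

lemma mem_image_of_lt
    (hE : E = (fun x : ℝ => ρ * x) '' E ∪ (fun x : ℝ => ρ * x + lam) '' E ∪
        (fun x : ℝ => ρ * x + (1 - ρ)) '' E)
    (hA : (fun x : ℝ => ρ * x) '' E ∪ (fun x : ℝ => ρ * x + lam) '' E ⊆ Icc 0 (lam + ρ))
    {y : ℝ} (hy : y ∈ E) (hy' : lam + ρ < y) : y ∈ (fun x : ℝ => ρ * x + (1 - ρ)) '' E := by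
  rw [hE] at hy
  exact hy.resolve_left fun h => (hA h).2.not_gt hy'

lemma one_sub_le_iff_of_image_subset (hρ0 : 0 < ρ) (hl1 : ρ ≤ lam) (hl2 : lam < (1 - ρ) / 2)
    (h0 : IsLeast E 0) (h1 : IsGreatest E 1) (hgap : GapBound E (1 - 2 * ρ - lam))
    (hsplit : ∀ y ∈ E, y ∉ Ioo (lam + ρ) (1 - ρ))
    (hf : (fun x : ℝ => r * x + t) ''
        ((fun x : ℝ => ρ * x) '' E ∪ (fun x : ℝ => ρ * x + lam) '' E) ⊆ E) :
    (1 - ρ ≤ t ↔ 1 - ρ ≤ r * (lam + ρ) + t) := by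
  have hψ₁ : ∀ x ∈ E, r * ρ * x + t ∈ E := fun x hx => by
    simpa [mul_assoc] using hf ⟨ρ * x, .inl ⟨x, hx, rfl⟩, rfl⟩
  have hψ₂ : ∀ x ∈ E, r * ρ * x + (r * lam + t) ∈ E := fun x hx => by
    simpa [mul_add, mul_assoc, add_assoc] using hf ⟨ρ * x + lam, .inr ⟨x, hx, rfl⟩, rfl⟩
  have hp0 : t ∈ E := by simpa using hψ₁ 0 h0.1
  have hp1 : r * ρ + t ∈ E := by simpa using hψ₁ 1 h1.1
  have hp2 : r * lam + t ∈ E := by simpa using hψ₂ 0 h0.1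
  have hp3 : r * ρ + (r * lam + t) ∈ E := by simpa using hψ₂ 1 h1.1
  have hsmall : |r * ρ| < 1 := by
    have hspan : |r| * (lam + ρ) ≤ 1 := by
      rw [← abs_of_pos (by linarith : 0 < lam + ρ), ← abs_mul, abs_le]
      constructor <;> nlinarith [h0.2 hp0, h1.2 hp0, h0.2 hp3, h1.2 hp3]
    rw [abs_mul, abs_of_pos hρ0]
    nlinarith [abs_nonneg r]
  have hside : ∀ c, (∀ x ∈ E, r * ρ * x + c ∈ E) → (1 - ρ ≤ c ↔ 1 - ρ ≤ r * ρ + c) := by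
    intro c hc
    by_contra hside
    have := hgap.sub_le_abs_mul (by linarith) (fun x hx => hsplit _ (hc x hx)) h0.1 h1.1
      hside
    nlinarith
  have hmid : (1 - ρ ≤ r * ρ + t ↔ 1 - ρ ≤ r * lam + t) := by
    have hl := hside t hψ₁
    have hr := hside _ hψ₂
    have h1' := hsplit _ hp1
    have h2' := hsplit _ hp2
    simp only [mem_Ioo, not_and_or, not_lt] at h1' h2'
    constructor <;> intro h <;> by_contra h'
    · have hr1 : 0 ≤ r + 1 := by nlinarith [h1.2 hp0, hl.2 h]
      nlinarith [mul_nonneg hr1 (sub_nonneg.2 hl1), h2'.resolve_right h']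
    · have hr1 : 0 ≤ 1 - r := by nlinarith [h1.2 hp3, hr.1 h]
      nlinarith [mul_nonneg hr1 (sub_nonneg.2 hl1), h1'.resolve_right h']
  rw [show r * (lam + ρ) + t = r * ρ + (r * lam + t) by ring]
  exact (hside t hψ₁).trans (hmid.trans (hside _ hψ₂))

end Dichotomy

theorem dichotomy_union_general (ρ lam r t : ℝ) (E : Set ℝ)
    (hρ0 : 0 < ρ) (hl1 : ρ ≤ lam) (hl2 : lam < (1 - ρ) / 2)
    (hEc : IsCompact E) (hEne : E.Nonempty)
    (hE : E = (fun x : ℝ => ρ * x) '' E ∪ (fun x : ℝ => ρ * x + lam) '' E ∪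
        (fun x : ℝ => ρ * x + (1 - ρ)) '' E)
    (hf : (fun x : ℝ => r * x + t) ''
        ((fun x : ℝ => ρ * x) '' E ∪ (fun x : ℝ => ρ * x + lam) '' E) ⊆ E) :
    (fun x : ℝ => r * x + t) ''
        ((fun x : ℝ => ρ * x) '' E ∪ (fun x : ℝ => ρ * x + lam) '' E) ⊆
        (fun x : ℝ => ρ * x) '' E ∪ (fun x : ℝ => ρ * x + lam) '' E ∨
      (fun x : ℝ => r * x + t) ''
        ((fun x : ℝ => ρ * x) '' E ∪ (fun x : ℝ => ρ * x + lam) '' E) ⊆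
        (fun x : ℝ => ρ * x + (1 - ρ)) '' E := by
  have hlam : 0 ≤ lam := hρ0.le.trans hl1
  have h0 := isLeast_zero_of_eq_union hEc hEne hE hρ0.le (by linarith) hlam
  have h1 := isGreatest_one_of_eq_union hEc hEne hE hρ0.le (by linarith) (by linarith)
  have hA := image_union_subset_Icc h0 h1 hρ0.le hlam
  have h3 := image_subset_Ici h0 hρ0.le
  have hgap := gapBound_of_maps_mem hl1 hl2.le (fun _ hx => maps_mem_of_eq_union hE hx)
    h0.1 h1.1
  have hsplit : ∀ y ∈ E, y ∉ Ioo (lam + ρ) (1 - ρ) := fun y hy hy' =>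
    (hA (mem_image_union_of_lt hE h3 hy hy'.2)).2.not_gt hy'.1
  have hends := one_sub_le_iff_of_image_subset hρ0 hl1 hl2 h0 h1 hgap hsplit hf
  by_cases ht : 1 - ρ ≤ t
  · right
    rintro _ ⟨x, hx, rfl⟩
    have hfx : 1 - ρ ≤ r * x + t :=
      ordConnected_Ici.mul_add_mem_of_mem_Icc (a := 0) (by simpa using ht) (hends.1 ht) (hA hx)
    exact mem_image_of_lt hE hA (hf ⟨x, hx, rfl⟩) (by linarith)
  · left
    rintro _ ⟨x, hx, rfl⟩
    have hfx : r * x + t < 1 - ρ :=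
      ordConnected_Iio.mul_add_mem_of_mem_Icc (a := 0) (by simpa using not_le.1 ht)
        (not_le.1 (mt hends.2 ht)) (hA hx)
    exact mem_image_union_of_lt hE h3 (hf ⟨x, hx, rfl⟩) hfx

theorem dichotomy_union (ρ lam r t : ℝ) (E : Set ℝ)
    (hρ0 : 0 < ρ) (hρ3 : ρ < 1 / 3) (hl1 : ρ ≤ lam) (hl2 : lam < (1 - ρ) / 2)
    (hEc : IsCompact E) (hEne : E.Nonempty)
    (hE : E = (fun x : ℝ => ρ * x) '' E ∪ (fun x : ℝ => ρ * x + lam) '' E ∪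
        (fun x : ℝ => ρ * x + (1 - ρ)) '' E)
    (hr : r ≠ 0)
    (hf : (fun x : ℝ => r * x + t) ''
        ((fun x : ℝ => ρ * x) '' E ∪ (fun x : ℝ => ρ * x + lam) '' E) ⊆ E) :
    (fun x : ℝ => r * x + t) ''
        ((fun x : ℝ => ρ * x) '' E ∪ (fun x : ℝ => ρ * x + lam) '' E) ⊆
        (fun x : ℝ => ρ * x) '' E ∪ (fun x : ℝ => ρ * x + lam) '' E ∨
      (fun x : ℝ => r * x + t) ''
        ((fun x : ℝ => ρ * x) '' E ∪ (fun x : ℝ => ρ * x + lam) '' E) ⊆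
        (fun x : ℝ => ρ * x + (1 - ρ)) '' E :=
  dichotomy_union_general ρ lam r t E hρ0 hl1 hl2 hEc hEne hE hf
end

section
/- Let 0 < ρ < 1/3, ρ < λ < (1−ρ)/2, and let E be the attractor of {ρx, ρx+λ, ρx+1−ρ}. If f(x) = rx + t with 0 < r < 1 and f(E) ⊆ E, then there exists i ∈ {1,2,3} such that f(E) ⊆ φᵢ(E), where φ₁(x)=ρx, φ₂(x)=ρx+λ, φ₃(x)=ρx+1−ρ. -/
/-!
Write `φ_c x = ρ x + c` for the offsets `c ∈ {0, λ, 1 - ρ}`. The gaps of `E` are the images of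
`G₁ = (ρ, λ)` and `G₂ = (λ + ρ, 1 - ρ)` under compositions of the `φ_c`, so none is longer than
`G₂`. If `f(E) ⊆ E` does not lie in one piece, then `f[0, 1]` crosses `G₁` or `G₂`, and as `r < 1`
the preimage of the crossed gap lies in a strictly longer gap of `E`. For `G₂` this is impossible.
For `G₁` the longer gap is some `φ_w(G₂)`, and `g = φ₀⁻¹ ∘ f ∘ φ_w` maps `E ∩ [0, λ + ρ]` into `E`
with `g(λ + ρ) ≤ 1 ≤ g(1 - ρ)`. Such a `g` sends `λ + ρ` into the third piece. If it sends `0` there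
as well, zoom in with `φ_{1-ρ}⁻¹` (possible only finitely often, since the ratio of `g` grows by
`1 / ρ` each time and `g[0, λ + ρ] ⊆ [0, 1]`). Otherwise `g[0, λ + ρ]` crosses `G₂`, which yields a
gap of `E` inside `[0, λ + ρ]` too long to be either `G₁` or a gap at scale `ρ`.
-/

open Set

namespace CantorAttractor

structure IsGap (K : Set ℝ) (a b : ℝ) : Prop where
  left_mem : a ∈ K
  right_mem : b ∈ K
  lt : a < b
  disjoint : Disjoint (Ioo a b) K

section Gap

variable {K : Set ℝ} {a b : ℝ}

theorem IsGap.le_or_le (hab : IsGap K a b) {z : ℝ} (hz : z ∈ K) : z ≤ a ∨ b ≤ z := by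
  by_contra! hc
  exact disjoint_left.1 hab.disjoint hc hz

theorem IsGap.eq_of_lt {p q : ℝ} (hab : IsGap K a b) (hpq : IsGap K p q) (haq : a < q)
    (hpb : p < b) : a = p ∧ b = q := by
  have hpa := (hab.le_or_le hpq.left_mem).resolve_right hpb.not_ge
  have hap := (hpq.le_or_le hab.left_mem).resolve_right haq.not_ge
  have hbq := (hpq.le_or_le hab.right_mem).resolve_left (by linarith [hab.lt])
  have hqb := (hab.le_or_le hpq.right_mem).resolve_left (by linarith [hpq.lt])
  exact ⟨le_antisymm hap hpa, le_antisymm hqb hbq⟩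

theorem exists_isGap_of_disjoint (hK : IsCompact K) {x y α β : ℝ} (hx : x ∈ K) (hy : y ∈ K)
    (hxα : x ≤ α) (hαβ : α < β) (hβy : β ≤ y) (hd : Disjoint (Ioo α β) K) :
    ∃ a b, IsGap K a b ∧ x ≤ a ∧ a ≤ α ∧ β ≤ b ∧ b ≤ y := by
  have hA : IsCompact (K ∩ Icc x α) := hK.inter_right isClosed_Icc
  have hB : IsCompact (K ∩ Icc β y) := hK.inter_right isClosed_Icc
  obtain ⟨haK, hxa, haα⟩ := hA.sSup_mem ⟨x, hx, le_rfl, hxα⟩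
  obtain ⟨hbK, hβb, hby⟩ := hB.sInf_mem ⟨y, hy, hβy, le_rfl⟩
  refine ⟨_, _, ⟨haK, hbK, by linarith, disjoint_left.2 fun z ⟨hza, hzb⟩ hz => ?_⟩,
    hxa, haα, hβb, hby⟩
  rcases le_or_gt z α with hzα | hαz
  · exact (le_csSup hA.bddAbove ⟨hz, by linarith, hzα⟩).not_gt hza
  rcases lt_or_ge z β with hzβ | hβz
  · exact disjoint_left.1 hd ⟨hαz, hzβ⟩ hz
  · exact (csInf_le hB.bddBelow ⟨hz, hβz, by linarith⟩).not_gt hzb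

theorem exists_isGap_of_mapsTo {E : Set ℝ} (hK : IsCompact K) {r t x y p q : ℝ} (hr : 0 < r)
    (hf : MapsTo (fun z => r * z + t) (K ∩ Icc x y) E) (hE : Disjoint (Ioo p q) E)
    (hx : x ∈ K) (hy : y ∈ K) (hxp : r * x + t ≤ p) (hpq : p < q) (hqy : q ≤ r * y + t) :
    ∃ a b, IsGap K a b ∧ x ≤ a ∧ b ≤ y ∧ r * a + t ≤ p ∧ q ≤ r * b + t := by
  have hxα : x ≤ (p - t) / r := by rw [le_div_iff₀ hr]; linarith
  have hαβ : (p - t) / r < (q - t) / r := by gcongr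
  have hβy : (q - t) / r ≤ y := by rw [div_le_iff₀ hr]; linarith
  have hd : Disjoint (Ioo ((p - t) / r) ((q - t) / r)) K := by
    refine disjoint_left.2 fun z ⟨hαz, hzβ⟩ hz => disjoint_left.1 hE ⟨?_, ?_⟩
      (hf ⟨hz, by linarith, by linarith⟩)
    · rw [div_lt_iff₀ hr] at hαz; linarith
    · rw [lt_div_iff₀ hr] at hzβ; linarith
  obtain ⟨a, b, hab, hxa, haα, hβb, hby⟩ := exists_isGap_of_disjoint hK hx hy hxα hαβ hβy hd
  rw [le_div_iff₀ hr] at haα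
  rw [div_le_iff₀ hr] at hβb
  exact ⟨a, b, hab, hxa, hby, by linarith, by linarith⟩

end Gap

theorem mapsTo_div_of_mapsTo_image {K E : Set ℝ} {ρ c s v : ℝ} (hρ : ρ ≠ 0)
    (hf : MapsTo (fun x => s * x + v) K ((fun y => ρ * y + c) '' E)) :
    MapsTo (fun x => s / ρ * x + (v - c) / ρ) K E := by
  intro x hx
  obtain ⟨y, hy, hyx⟩ := hf hx
  convert hy using 1
  field_simp
  linear_combination -hyx

structure Params (ρ lam : ℝ) : Prop where
  pos : 0 < ρ
  lt_lam : ρ < lam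
  lam_lt : lam < (1 - ρ) / 2

def IsOffset (ρ lam c : ℝ) : Prop := c = 0 ∨ c = lam ∨ c = 1 - ρ

structure IsAttractor (ρ lam : ℝ) (E : Set ℝ) : Prop extends Params ρ lam where
  isCompact : IsCompact E
  nonempty : E.Nonempty
  eq_union : E = (fun x : ℝ => ρ * x) '' E ∪ (fun x : ℝ => ρ * x + lam) '' E ∪
    (fun x : ℝ => ρ * x + (1 - ρ)) '' E

variable {ρ lam c : ℝ} {E : Set ℝ}

theorem Params.eq_or_add_lt (hp : Params ρ lam) {c' : ℝ} (hc : IsOffset ρ lam c)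
    (hc' : IsOffset ρ lam c') : c = c' ∨ c + ρ < c' ∨ c' + ρ < c := by
  have := hp.pos; have := hp.lt_lam; have := hp.lam_lt
  rcases hc with rfl | rfl | rfl <;> rcases hc' with rfl | rfl | rfl <;>
    first | exact Or.inl rfl | exact Or.inr (Or.inl (by linarith)) |
      exact Or.inr (Or.inr (by linarith))

namespace IsAttractor

theorem exists_offset_of_mem (h : IsAttractor ρ lam E) {x : ℝ} (hx : x ∈ E) :
    ∃ c, IsOffset ρ lam c ∧ x ∈ (fun y => ρ * y + c) '' E := by
  rw [h.eq_union] at hx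
  rcases hx with (⟨y, hy, rfl⟩ | ⟨y, hy, rfl⟩) | ⟨y, hy, rfl⟩
  · exact ⟨0, Or.inl rfl, y, hy, add_zero _⟩
  · exact ⟨lam, Or.inr (Or.inl rfl), y, hy, rfl⟩
  · exact ⟨1 - ρ, Or.inr (Or.inr rfl), y, hy, rfl⟩

theorem mapsTo_offset (h : IsAttractor ρ lam E) (hc : IsOffset ρ lam c) :
    MapsTo (fun x => ρ * x + c) E E := by
  intro x hx
  rw [h.eq_union]
  rcases hc with rfl | rfl | rfl
  · exact Or.inl (Or.inl ⟨x, hx, (add_zero _).symm⟩)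
  · exact Or.inl (Or.inr ⟨x, hx, rfl⟩)
  · exact Or.inr ⟨x, hx, rfl⟩

theorem subset_Icc (h : IsAttractor ρ lam E) : E ⊆ Icc 0 1 := by
  have := h.pos; have := h.lt_lam; have := h.lam_lt
  have hinf : 0 ≤ sInf E := by
    obtain ⟨c, hc, y, hy, hyc⟩ := h.exists_offset_of_mem (h.isCompact.sInf_mem h.nonempty)
    have := csInf_le h.isCompact.bddBelow hy
    rcases hc with rfl | rfl | rfl <;> nlinarith
  have hsup : sSup E ≤ 1 := by
    obtain ⟨c, hc, y, hy, hyc⟩ := h.exists_offset_of_mem (h.isCompact.sSup_mem h.nonempty)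
    have := le_csSup h.isCompact.bddAbove hy
    rcases hc with rfl | rfl | rfl <;> nlinarith
  exact fun x hx => ⟨hinf.trans (csInf_le h.isCompact.bddBelow hx),
    (le_csSup h.isCompact.bddAbove hx).trans hsup⟩

theorem zero_mem (h : IsAttractor ρ lam E) : (0 : ℝ) ∈ E := by
  have hm := h.isCompact.sInf_mem h.nonempty
  have hle : sInf E ≤ ρ * sInf E + 0 :=
    csInf_le h.isCompact.bddBelow (h.mapsTo_offset (Or.inl rfl) hm)
  have : sInf E = 0 := by nlinarith [(h.subset_Icc hm).1, h.pos, h.lt_lam, h.lam_lt]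
  rwa [this] at hm

theorem one_mem (h : IsAttractor ρ lam E) : (1 : ℝ) ∈ E := by
  have hM := h.isCompact.sSup_mem h.nonempty
  have hle : ρ * sSup E + (1 - ρ) ≤ sSup E :=
    le_csSup h.isCompact.bddAbove (h.mapsTo_offset (Or.inr (Or.inr rfl)) hM)
  have : sSup E = 1 := by nlinarith [(h.subset_Icc hM).2, h.pos, h.lt_lam, h.lam_lt]
  rwa [this] at hM

theorem exists_offset_le_le (h : IsAttractor ρ lam E) {x : ℝ} (hx : x ∈ E) :
    ∃ c, IsOffset ρ lam c ∧ c ≤ x ∧ x ≤ c + ρ := by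
  obtain ⟨c, hc, y, hy, rfl⟩ := h.exists_offset_of_mem hx
  obtain ⟨hy0, hy1⟩ := h.subset_Icc hy
  exact ⟨c, hc, by nlinarith [h.pos], by nlinarith [h.pos]⟩

theorem mem_image_of_le_of_le (h : IsAttractor ρ lam E) (hc : IsOffset ρ lam c) {x : ℝ}
    (hx : x ∈ E) (hcx : c ≤ x) (hxc : x ≤ c + ρ) : x ∈ (fun y => ρ * y + c) '' E := by
  obtain ⟨c', hc', y, hy, rfl⟩ := h.exists_offset_of_mem hx
  obtain ⟨hy0, hy1⟩ := h.subset_Icc hy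
  have := h.pos
  rcases h.eq_or_add_lt hc' hc with rfl | hlt | hlt
  · exact ⟨y, hy, rfl⟩
  · nlinarith
  · nlinarith

theorem isGap_one (h : IsAttractor ρ lam E) : IsGap E ρ lam where
  left_mem := by simpa using h.mapsTo_offset (Or.inl rfl) h.one_mem
  right_mem := by simpa using h.mapsTo_offset (Or.inr (Or.inl rfl)) h.zero_mem
  lt := h.lt_lam
  disjoint := disjoint_left.2 fun z ⟨hρz, hzl⟩ hz => by
    obtain ⟨c, hc, hcz, hzc⟩ := h.exists_offset_le_le hz
    have := h.lam_lt
    rcases hc with rfl | rfl | rfl <;> linarith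

theorem isGap_two (h : IsAttractor ρ lam E) : IsGap E (lam + ρ) (1 - ρ) where
  left_mem := by simpa [add_comm] using h.mapsTo_offset (Or.inr (Or.inl rfl)) h.one_mem
  right_mem := by simpa using h.mapsTo_offset (Or.inr (Or.inr rfl)) h.zero_mem
  lt := by linarith [h.lt_lam, h.lam_lt]
  disjoint := disjoint_left.2 fun z ⟨hz₁, hz₂⟩ hz => by
    obtain ⟨c, hc, hcz, hzc⟩ := h.exists_offset_le_le hz
    have := h.lt_lam
    rcases hc with rfl | rfl | rfl <;> linarith

end IsAttractor

namespace IsGap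

variable {a b : ℝ}

theorem eq_or_exists_offset (h : IsAttractor ρ lam E) (hab : IsGap E a b) :
    (a = ρ ∧ b = lam) ∨ (a = lam + ρ ∧ b = 1 - ρ) ∨
      ∃ c, IsOffset ρ lam c ∧ c ≤ a ∧ b ≤ c + ρ := by
  obtain ⟨c, hc, hca, hac⟩ := h.exists_offset_le_le hab.left_mem
  by_cases hbc : b ≤ c + ρ
  · exact Or.inr (Or.inr ⟨c, hc, hca, hbc⟩)
  have := h.lt_lam; have := h.lam_lt
  rcases hc with rfl | rfl | rfl
  · exact Or.inl (hab.eq_of_lt h.isGap_one (by linarith) (by linarith))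
  · exact Or.inr (Or.inl (hab.eq_of_lt h.isGap_two (by linarith) (by linarith)))
  · linarith [(h.subset_Icc hab.right_mem).2]

theorem exists_preimage (h : IsAttractor ρ lam E) (hab : IsGap E a b) (hc : IsOffset ρ lam c)
    (hca : c ≤ a) (hbc : b ≤ c + ρ) :
    ∃ a' b', IsGap E a' b' ∧ ρ * a' + c = a ∧ ρ * b' + c = b := by
  have := hab.lt
  obtain ⟨a', ha', rfl⟩ := h.mem_image_of_le_of_le hc hab.left_mem hca (by linarith)
  obtain ⟨b', hb', rfl⟩ := h.mem_image_of_le_of_le hc hab.right_mem (by linarith) hbc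
  refine ⟨a', b', ⟨ha', hb', (mul_lt_mul_iff_right₀ h.pos).1 (by linarith), ?_⟩, rfl, rfl⟩
  refine disjoint_left.2 fun z ⟨ha'z, hzb'⟩ hz => disjoint_left.1 hab.disjoint ?_
    (h.mapsTo_offset hc hz)
  exact ⟨by linarith [mul_lt_mul_of_pos_left ha'z h.pos],
    by linarith [mul_lt_mul_of_pos_left hzb' h.pos]⟩

theorem exists_affine (h : IsAttractor ρ lam E) (hab : IsGap E a b) :
    ∃ δ τ, 0 < δ ∧ δ ≤ 1 ∧ MapsTo (fun x => δ * x + τ) E E ∧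
      (δ * ρ + τ = a ∧ δ * lam + τ = b ∨ δ * (lam + ρ) + τ = a ∧ δ * (1 - ρ) + τ = b) := by
  have := h.pos; have := h.lt_lam; have := h.lam_lt
  obtain ⟨n, hn⟩ := exists_pow_lt_of_lt_one (sub_pos.2 hab.lt) (by linarith : ρ < 1)
  induction n generalizing a b with
  | zero =>
    linarith [(h.subset_Icc hab.left_mem).1, (h.subset_Icc hab.right_mem).2, pow_zero ρ]
  | succ n ih =>
    rcases hab.eq_or_exists_offset h with ⟨rfl, rfl⟩ | ⟨rfl, rfl⟩ | ⟨c, hc, hca, hbc⟩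
    · exact ⟨1, 0, one_pos, le_rfl, fun x hx => by simpa using hx, Or.inl (by simp)⟩
    · exact ⟨1, 0, one_pos, le_rfl, fun x hx => by simpa using hx, Or.inr (by simp)⟩
    obtain ⟨a', b', hab', rfl, rfl⟩ := hab.exists_preimage h hc hca hbc
    obtain ⟨δ, τ, hδ, hδ1, hmaps, hends⟩ := ih hab' (by rw [pow_succ] at hn; nlinarith)
    refine ⟨ρ * δ, ρ * τ + c, by positivity, by nlinarith, fun x hx => ?_, ?_⟩
    · convert h.mapsTo_offset hc (hmaps hx) using 1
      ring
    · rcases hends with ⟨rfl, rfl⟩ | ⟨rfl, rfl⟩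
      · exact Or.inl ⟨by ring, by ring⟩
      · exact Or.inr ⟨by ring, by ring⟩

theorem sub_le (h : IsAttractor ρ lam E) (hab : IsGap E a b) : b - a ≤ 1 - 2 * ρ - lam := by
  have := h.lt_lam; have := h.lam_lt
  obtain ⟨δ, τ, hδ, hδ1, -, ⟨rfl, rfl⟩ | ⟨rfl, rfl⟩⟩ := hab.exists_affine h <;> nlinarith

end IsGap

namespace IsAttractor

variable {r t s v : ℝ}

theorem not_mapsTo_inter_Icc_across_gap_two (h : IsAttractor ρ lam E) (hs : 0 < s)
    (hv : v ≤ lam + ρ) (hcross : 1 - ρ ≤ s * (lam + ρ) + v) (hle : s * (lam + ρ) + v ≤ 1) :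
    ¬ MapsTo (fun x => s * x + v) (E ∩ Icc 0 (lam + ρ)) E := by
  intro hmaps
  have := h.pos; have := h.lt_lam; have := h.lam_lt
  have hv0 : 0 ≤ v :=
    (h.subset_Icc (by simpa using hmaps ⟨h.zero_mem, le_rfl, by linarith⟩)).1
  obtain ⟨a, b, hab, -, hby, ha, hb⟩ := exists_isGap_of_mapsTo h.isCompact hs hmaps
    h.isGap_two.disjoint h.zero_mem h.isGap_two.left_mem (by simpa using hv)
    h.isGap_two.lt hcross
  rcases hab.eq_or_exists_offset h with ⟨rfl, rfl⟩ | ⟨rfl, rfl⟩ | ⟨c, hc, hca, hbc⟩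
  · -- `s (λ - ρ) ≥ 1 - 2ρ - λ > λ - ρ` gives `s > 1`, while `s ρ ≤ 1 - (1 - ρ)`
    nlinarith
  · linarith
  · obtain ⟨a', b', hab', rfl, rfl⟩ := hab.exists_preimage h hc hca hbc
    have hsρ : s * ρ < 1 := by nlinarith
    have := mul_le_mul_of_nonneg_left (hab'.sub_le h) (by positivity : 0 ≤ s * ρ)
    nlinarith

theorem not_mapsTo_inter_Icc (h : IsAttractor ρ lam E) (hs : 0 < s)
    (hl : s * (lam + ρ) + v ≤ 1) (hr : 1 ≤ s * (1 - ρ) + v) :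
    ¬ MapsTo (fun x => s * x + v) (E ∩ Icc 0 (lam + ρ)) E := by
  intro hmaps
  have := h.pos; have := h.lt_lam; have := h.lam_lt
  obtain ⟨n, hn⟩ := exists_pow_lt_of_lt_one (mul_pos hs (by linarith) : 0 < s * (lam + ρ))
    (by linarith : ρ < 1)
  induction n generalizing s v with
  | zero =>
    have hv : v ∈ E := by simpa using hmaps ⟨h.zero_mem, le_rfl, by linarith⟩
    linarith [(h.subset_Icc hv).1, pow_zero ρ]
  | succ n ih =>
    have hv : v ∈ E := by simpa using hmaps ⟨h.zero_mem, le_rfl, by linarith⟩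
    have hv0 := (h.subset_Icc hv).1
    have hg : s * (lam + ρ) + v ∈ E := hmaps ⟨h.isGap_two.left_mem, by linarith, le_rfl⟩
    have hg' : 1 - ρ ≤ s * (lam + ρ) + v := by
      refine (h.isGap_two.le_or_le hg).resolve_left fun hle => ?_
      have hs1 : s ≤ 1 := by nlinarith
      nlinarith [mul_le_mul_of_nonneg_right hs1 (by linarith : (0 : ℝ) ≤ 1 - 2 * ρ - lam)]
    rcases h.isGap_two.le_or_le hv with hv' | hv'
    · exact h.not_mapsTo_inter_Icc_across_gap_two hs hv' hg' hl hmaps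
    have hzoom : MapsTo (fun x => s * x + v) (E ∩ Icc 0 (lam + ρ))
        ((fun y => ρ * y + (1 - ρ)) '' E) := fun x hx =>
      h.mem_image_of_le_of_le (Or.inr (Or.inr rfl)) (hmaps hx) (by nlinarith [hx.2.1])
        (by nlinarith [hx.2.2])
    refine ih (div_pos hs h.pos) ?_ ?_ (mapsTo_div_of_mapsTo_image h.pos.ne' hzoom) ?_
    · rw [show s / ρ * (lam + ρ) + (v - (1 - ρ)) / ρ = (s * (lam + ρ) + v - (1 - ρ)) / ρ by ring,
        div_le_one h.pos]
      linarith
    · rw [show s / ρ * (1 - ρ) + (v - (1 - ρ)) / ρ = (s * (1 - ρ) + v - (1 - ρ)) / ρ by ring,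
        le_div_iff₀ h.pos]
      linarith
    · rw [show s / ρ * (lam + ρ) = s * (lam + ρ) / ρ by ring, lt_div_iff₀ h.pos, ← pow_succ]
      exact hn

theorem not_mapsTo_across_gap_two (h : IsAttractor ρ lam E) (hr0 : 0 < r) (hr1 : r < 1)
    (ht : t ≤ lam + ρ) (hrt : 1 - ρ ≤ r + t) : ¬ MapsTo (fun x => r * x + t) E E := by
  intro hf
  have := h.lt_lam; have := h.lam_lt
  obtain ⟨a, b, hab, -, -, ha, hb⟩ := exists_isGap_of_mapsTo h.isCompact hr0
    (hf.mono_left inter_subset_left) h.isGap_two.disjoint h.zero_mem h.one_mem (by simpa using ht)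
    h.isGap_two.lt (by simpa using hrt)
  have := hab.sub_le h
  nlinarith

theorem not_mapsTo_across_gap_one (h : IsAttractor ρ lam E) (hr0 : 0 < r) (hr1 : r < 1)
    (ht : t ≤ ρ) (hrt : lam ≤ r + t) : ¬ MapsTo (fun x => r * x + t) E E := by
  intro hf
  have := h.pos; have := h.lt_lam; have := h.lam_lt
  obtain ⟨a, b, hab, -, -, ha, hb⟩ := exists_isGap_of_mapsTo h.isCompact hr0
    (hf.mono_left inter_subset_left) h.isGap_one.disjoint h.zero_mem h.one_mem (by simpa using ht)
    h.lt_lam (by simpa using hrt)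
  obtain ⟨δ, τ, hδ, hδ1, hmaps, ⟨rfl, rfl⟩ | ⟨rfl, rfl⟩⟩ := hab.exists_affine h
  · have hrδ : r * δ < 1 := by nlinarith
    nlinarith [mul_lt_mul_of_pos_right hrδ (sub_pos.2 h.lt_lam)]
  have hF : MapsTo (fun x => r * δ * x + (r * τ + t)) (E ∩ Icc 0 (lam + ρ))
      ((fun y => ρ * y + 0) '' E) := by
    rintro x ⟨hx, -, hxl⟩
    have hFx : r * δ * x + (r * τ + t) ∈ E := by convert hf (hmaps hx) using 1; ring
    refine h.mem_image_of_le_of_le (Or.inl rfl) hFx (h.subset_Icc hFx).1 ?_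
    nlinarith [mul_le_mul_of_nonneg_left hxl (mul_pos hr0 hδ).le]
  refine h.not_mapsTo_inter_Icc (div_pos (mul_pos hr0 hδ) h.pos) ?_ ?_
    (mapsTo_div_of_mapsTo_image h.pos.ne' hF)
  · rw [show r * δ / ρ * (lam + ρ) + (r * τ + t - 0) / ρ = (r * (δ * (lam + ρ) + τ) + t) / ρ by
      ring, div_le_one h.pos]
    exact ha
  · rw [show r * δ / ρ * (1 - ρ) + (r * τ + t - 0) / ρ = (r * (δ * (1 - ρ) + τ) + t) / ρ by
      ring, le_div_iff₀ h.pos]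
    linarith

theorem exists_offset_mapsTo_image (h : IsAttractor ρ lam E) (hr0 : 0 < r) (hr1 : r < 1)
    (hf : MapsTo (fun x => r * x + t) E E) :
    ∃ c, IsOffset ρ lam c ∧ MapsTo (fun x => r * x + t) E ((fun y => ρ * y + c) '' E) := by
  have ht : t ∈ E := by simpa using hf h.zero_mem
  have hrt : r + t ∈ E := by simpa using hf h.one_mem
  obtain ⟨c, hc, hct, htc⟩ := h.exists_offset_le_le ht
  suffices hrtc : r + t ≤ c + ρ by
    refine ⟨c, hc, fun x hx => h.mem_image_of_le_of_le hc (hf hx) ?_ ?_⟩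
    · nlinarith [(h.subset_Icc hx).1]
    · nlinarith [(h.subset_Icc hx).2]
  by_contra! hlt
  rcases hc with rfl | rfl | rfl
  · exact h.not_mapsTo_across_gap_one hr0 hr1 (by linarith)
      ((h.isGap_one.le_or_le hrt).resolve_left (by linarith)) hf
  · exact h.not_mapsTo_across_gap_two hr0 hr1 htc
      ((h.isGap_two.le_or_le hrt).resolve_left (by linarith)) hf
  · linarith [(h.subset_Icc hrt).2]

end IsAttractor

end CantorAttractor

theorem positive_ratio_into_piece_general (ρ lam r t : ℝ) (E : Set ℝ)
    (hρ0 : 0 < ρ) (hl1 : ρ < lam) (hl2 : lam < (1 - ρ) / 2)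
    (hEc : IsCompact E) (hEne : E.Nonempty)
    (hE : E = (fun x : ℝ => ρ * x) '' E ∪ (fun x : ℝ => ρ * x + lam) '' E ∪
        (fun x : ℝ => ρ * x + (1 - ρ)) '' E)
    (hr0 : 0 < r) (hr1 : r < 1)
    (hf : (fun x : ℝ => r * x + t) '' E ⊆ E) :
    (fun x : ℝ => r * x + t) '' E ⊆ (fun x : ℝ => ρ * x) '' E ∨
      (fun x : ℝ => r * x + t) '' E ⊆ (fun x : ℝ => ρ * x + lam) '' E ∨
      (fun x : ℝ => r * x + t) '' E ⊆ (fun x : ℝ => ρ * x + (1 - ρ)) '' E := by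
  have h : CantorAttractor.IsAttractor ρ lam E := ⟨⟨hρ0, hl1, hl2⟩, hEc, hEne, hE⟩
  obtain ⟨c, hc, hmaps⟩ := h.exists_offset_mapsTo_image hr0 hr1 (mapsTo_iff_image_subset.2 hf)
  rcases hc with rfl | rfl | rfl
  · exact Or.inl (by simpa using hmaps.image_subset)
  · exact Or.inr (Or.inl hmaps.image_subset)
  · exact Or.inr (Or.inr hmaps.image_subset)

theorem positive_ratio_into_piece (ρ lam r t : ℝ) (E : Set ℝ)
    (hρ0 : 0 < ρ) (hρ3 : ρ < 1 / 3) (hl1 : ρ < lam) (hl2 : lam < (1 - ρ) / 2)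
    (hEc : IsCompact E) (hEne : E.Nonempty)
    (hE : E = (fun x : ℝ => ρ * x) '' E ∪ (fun x : ℝ => ρ * x + lam) '' E ∪
        (fun x : ℝ => ρ * x + (1 - ρ)) '' E)
    (hr0 : 0 < r) (hr1 : r < 1)
    (hf : (fun x : ℝ => r * x + t) '' E ⊆ E) :
    (fun x : ℝ => r * x + t) '' E ⊆ (fun x : ℝ => ρ * x) '' E ∨
      (fun x : ℝ => r * x + t) '' E ⊆ (fun x : ℝ => ρ * x + lam) '' E ∨
      (fun x : ℝ => r * x + t) '' E ⊆ (fun x : ℝ => ρ * x + (1 - ρ)) '' E :=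
  positive_ratio_into_piece_general ρ lam r t E hρ0 hl1 hl2 hEc hEne hE hr0 hr1 hf
end
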